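/- arXiv:2005.07450 — 5 statements merged into one kernel-verified Lean document; each statement's English description precedes it below -/
import Mathlib

section
/- Let f: [0,1] → ℝ and g: [0,1] → ℝ be continuous with g(x) > 0 for all x ∈ [0,1]. Then the Riemann-type sums S_n := Σ_{i=1}^{n} ( ∫_{(i−1)/n}^{i/n} f(x) dx )² / ( ∫_{(i−1)/n}^{i/n} g(x) dx ) converge, as n → ∞, to ∫_0^1 f(x)²/g(x) dx, and this limit is finite. -/
open MeasureTheory Filter

lemma bin_est (F G H A B m M L e : ℝ) (hL : 0 < L) (hm : 0 < m) (hM1 : 1 ≤ M)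
    (hA : |A| ≤ M) (hB : |B| ≤ M) (hmB : m ≤ B) (hmG : m * L ≤ G)
    (he1 : e ≤ 1) (he0 : 0 ≤ e)
    (hF : |F - A * L| ≤ e * L) (hG : |G - B * L| ≤ e * L)
    (hH : |H - A ^ 2 / B * L| ≤ e * L) :
    |F ^ 2 / G - H| ≤ ((3 * M ^ 2 + M) / m ^ 2 + 1) * (e * L) := by
  have hG0 : 0 < G := lt_of_lt_of_le (mul_pos hm hL) hmG
  have hB0 : 0 < B := lt_of_lt_of_le hm hmB
  have h1 := abs_le.1 hF
  have h2 := abs_le.1 hG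
  have h3 := abs_le.1 hA
  have h4 := abs_le.1 hB
  have key1 : |F ^ 2 / G - A ^ 2 * L / B| ≤ e * L * (3 * M ^ 2 + M) / m ^ 2 := by
    rw [div_sub_div _ _ hG0.ne' hB0.ne', abs_div]
    have hden : m ^ 2 * L ≤ G * B := by nlinarith
    have hBM : |B| ≤ M := hB
    have hFw : |F + A * L| ≤ (2 * M + 1) * L := by
      have h5 : |F + A * L| ≤ |F - A * L| + |A * L| + |A * L| := by
        calc |F + A * L| = |F - A * L + (A * L + A * L)| := by ring_nf
          _ ≤ |F - A * L| + |A * L + A * L| := abs_add_le _ _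
          _ ≤ |F - A * L| + (|A * L| + |A * L|) := by gcongr; exact abs_add_le _ _
          _ = |F - A * L| + |A * L| + |A * L| := by ring
      have h6 : |A * L| ≤ M * L := by
        rw [abs_mul, abs_of_pos hL]
        exact mul_le_mul_of_nonneg_right hA hL.le
      nlinarith
    have hnum : |F ^ 2 * B - G * (A ^ 2 * L)| ≤ e * L ^ 2 * (3 * M ^ 2 + M) := by
      have heq : F ^ 2 * B - G * (A ^ 2 * L) =
          B * ((F - A * L) * (F + A * L)) + A ^ 2 * L * (B * L - G) := by ring
      have t1 : |B * ((F - A * L) * (F + A * L))| ≤ M * (e * L * ((2 * M + 1) * L)) := by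
        rw [abs_mul, abs_mul]
        exact mul_le_mul hBM (mul_le_mul hF hFw (abs_nonneg _) (by positivity))
          (by positivity) (by linarith)
      have t2 : |A ^ 2 * L * (B * L - G)| ≤ M ^ 2 * L * (e * L) := by
        rw [abs_mul, abs_of_nonneg (by positivity : (0:ℝ) ≤ A ^ 2 * L), abs_sub_comm]
        have hA2 : A ^ 2 ≤ M ^ 2 := by nlinarith [abs_nonneg A, neg_abs_le A, le_abs_self A]
        have : |G - B * L| ≤ e * L := hG
        exact mul_le_mul (mul_le_mul hA2 le_rfl hL.le (by positivity)) this
          (abs_nonneg _) (by positivity)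
      calc |F ^ 2 * B - G * (A ^ 2 * L)|
          ≤ |B * ((F - A * L) * (F + A * L))| + |A ^ 2 * L * (B * L - G)| := by
            rw [heq]; exact abs_add_le _ _
        _ ≤ M * (e * L * ((2 * M + 1) * L)) + M ^ 2 * L * (e * L) := add_le_add t1 t2
        _ = e * L ^ 2 * (3 * M ^ 2 + M) := by ring
    calc |F ^ 2 * B - G * (A ^ 2 * L)| / |G * B|
        = |F ^ 2 * B - G * (A ^ 2 * L)| / (G * B) := by
          rw [abs_of_pos (mul_pos hG0 hB0)]
      _ ≤ e * L ^ 2 * (3 * M ^ 2 + M) / (m ^ 2 * L) := by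
          apply div_le_div₀ (by positivity) hnum (by positivity) hden
      _ = e * L * (3 * M ^ 2 + M) / m ^ 2 := by
          field_simp
  calc |F ^ 2 / G - H| ≤ |F ^ 2 / G - A ^ 2 * L / B| + |A ^ 2 * L / B - H| :=
        abs_sub_le _ _ _
    _ ≤ e * L * (3 * M ^ 2 + M) / m ^ 2 + e * L := by
        refine add_le_add key1 ?_
        rw [abs_sub_comm]
        have : A ^ 2 / B * L = A ^ 2 * L / B := by ring
        rwa [this] at hH
    _ = ((3 * M ^ 2 + M) / m ^ 2 + 1) * (e * L) := by ring


theorem stmt4 (f g : ℝ → ℝ)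
    (hf : ContinuousOn f (Set.Icc 0 1)) (hg : ContinuousOn g (Set.Icc 0 1))
    (hgpos : ∀ x ∈ Set.Icc (0 : ℝ) 1, 0 < g x) :
    Tendsto (fun n : ℕ => ∑ i ∈ Finset.range n,
        (∫ x in ((i : ℝ) / n)..(((i : ℝ) + 1) / n), f x) ^ 2 /
          (∫ x in ((i : ℝ) / n)..(((i : ℝ) + 1) / n), g x))
      atTop (nhds (∫ x in (0 : ℝ)..1, (f x) ^ 2 / g x)) := by
  obtain ⟨Mf, hMf⟩ := isCompact_Icc.exists_bound_of_continuousOn hf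
  obtain ⟨Mg, hMg⟩ := isCompact_Icc.exists_bound_of_continuousOn hg
  set M : ℝ := max 1 (max Mf Mg) with hMdef
  have hM1 : (1:ℝ) ≤ M := le_max_left _ _
  have hfM : ∀ x ∈ Set.Icc (0:ℝ) 1, |f x| ≤ M := fun x hx =>
    (hMf x hx).trans ((le_max_left _ _).trans (le_max_right _ _))
  have hgM : ∀ x ∈ Set.Icc (0:ℝ) 1, |g x| ≤ M := fun x hx =>
    (hMg x hx).trans ((le_max_right _ _).trans (le_max_right _ _))
  obtain ⟨x0, hx0, hx0min'⟩ := isCompact_Icc.exists_isMinOn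
    (⟨0, by norm_num⟩ : (Set.Icc (0:ℝ) 1).Nonempty) hg
  have hx0min : ∀ x ∈ Set.Icc (0:ℝ) 1, g x0 ≤ g x := fun x hx => hx0min' hx
  set m : ℝ := g x0 with hmdef
  have hm : 0 < m := hgpos x0 hx0
  set h : ℝ → ℝ := fun x => (f x) ^ 2 / g x with hhdef
  have hh : ContinuousOn h (Set.Icc 0 1) :=
    (hf.pow 2).div hg fun x hx => (hgpos x hx).ne'
  rw [Metric.tendsto_atTop]
  intro ε hε
  set K0 : ℝ := (3 * M ^ 2 + M) / m ^ 2 + 1 with hK0def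
  have hK0 : 0 < K0 := by positivity
  set e : ℝ := min 1 (ε / (2 * K0)) with hedef
  have he0 : 0 < e := lt_min one_pos (by positivity)
  have he1 : e ≤ 1 := min_le_left _ _
  have heK : K0 * e ≤ ε / 2 := by
    have : e ≤ ε / (2 * K0) := min_le_right _ _
    calc K0 * e ≤ K0 * (ε / (2 * K0)) := by
          exact mul_le_mul_of_nonneg_left this hK0.le
      _ = ε / 2 := by field_simp
  have uf := Metric.uniformContinuousOn_iff.1
    (isCompact_Icc.uniformContinuousOn_of_continuous hf)
  have ug := Metric.uniformContinuousOn_iff.1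
    (isCompact_Icc.uniformContinuousOn_of_continuous hg)
  have uh := Metric.uniformContinuousOn_iff.1
    (isCompact_Icc.uniformContinuousOn_of_continuous hh)
  obtain ⟨δ₁, hδ₁, Hf⟩ := uf e he0
  obtain ⟨δ₂, hδ₂, Hg⟩ := ug e he0
  obtain ⟨δ₃, hδ₃, Hh⟩ := uh e he0
  set δ : ℝ := min δ₁ (min δ₂ δ₃) with hδdef
  have hδ : 0 < δ := lt_min hδ₁ (lt_min hδ₂ hδ₃)
  obtain ⟨N0, hN0⟩ := exists_nat_one_div_lt hδ
  refine ⟨N0 + 1, fun n hn => ?_⟩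
  have hn1 : 1 ≤ n := le_trans (Nat.le_add_left 1 N0) hn
  have hn0 : (0:ℝ) < n := by exact_mod_cast hn1
  have hmesh : 1 / (n:ℝ) < δ := by
    refine lt_of_le_of_lt ?_ hN0
    apply one_div_le_one_div_of_le (by positivity)
    exact_mod_cast hn
  -- basic facts about the bins
  have hbin : ∀ i : ℕ, i < n → (0:ℝ) ≤ (i:ℝ)/n ∧ ((i:ℝ)+1)/n ≤ 1 ∧
      (i:ℝ)/n ≤ ((i:ℝ)+1)/n ∧ ((i:ℝ)+1)/n - (i:ℝ)/n = 1/n := by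
    intro i hi
    have hi' : (i:ℝ) + 1 ≤ n := by exact_mod_cast Nat.succ_le_of_lt hi
    refine ⟨by positivity, ?_, ?_, ?_⟩
    · rw [div_le_one hn0]; exact hi'
    · gcongr; linarith
    · field_simp; ring
  have hsub : ∀ i : ℕ, i < n → Set.Icc ((i:ℝ)/n) (((i:ℝ)+1)/n) ⊆ Set.Icc 0 1 := by
    intro i hi
    obtain ⟨h0, h1, hab, _⟩ := hbin i hi
    exact Set.Icc_subset_Icc h0 h1
  have hufix : ∀ i : ℕ, i < n → Set.uIcc ((i:ℝ)/n) (((i:ℝ)+1)/n) ⊆ Set.Icc 0 1 := by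
    intro i hi
    rw [Set.uIcc_of_le (hbin i hi).2.2.1]
    exact hsub i hi
  have hfint : ∀ i : ℕ, i < n → IntervalIntegrable f volume ((i:ℝ)/n) (((i:ℝ)+1)/n) :=
    fun i hi => (hf.mono (hufix i hi)).intervalIntegrable
  have hgint : ∀ i : ℕ, i < n → IntervalIntegrable g volume ((i:ℝ)/n) (((i:ℝ)+1)/n) :=
    fun i hi => (hg.mono (hufix i hi)).intervalIntegrable
  have hhint : ∀ i : ℕ, i < n → IntervalIntegrable h volume ((i:ℝ)/n) (((i:ℝ)+1)/n) :=
    fun i hi => (hh.mono (hufix i hi)).intervalIntegrable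
  have hI : (∫ x in (0:ℝ)..1, h x)
      = ∑ i ∈ Finset.range n, ∫ x in ((i:ℝ)/n)..(((i:ℝ)+1)/n), h x := by
    have hadj := intervalIntegral.sum_integral_adjacent_intervals (μ := volume) (f := h)
      (a := fun i : ℕ => (i:ℝ)/n) (n := n) (fun k hk => by
        simpa [Nat.cast_add, Nat.cast_one] using hhint k hk)
    simp only [Nat.cast_add, Nat.cast_one] at hadj
    rw [hadj]
    norm_num [div_self hn0.ne']
  have key : ∀ i ∈ Finset.range n,
      |(∫ x in ((i:ℝ)/n)..(((i:ℝ)+1)/n), f x) ^ 2 /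
        (∫ x in ((i:ℝ)/n)..(((i:ℝ)+1)/n), g x) -
        (∫ x in ((i:ℝ)/n)..(((i:ℝ)+1)/n), h x)| ≤ K0 * (e * (1/n)) := by
    intro i hi'
    have hi := Finset.mem_range.1 hi'
    obtain ⟨h0, h1, hab, hlen⟩ := hbin i hi
    set a : ℝ := (i:ℝ)/n with hadef
    set b : ℝ := ((i:ℝ)+1)/n with hbdef
    have haI : a ∈ Set.Icc (0:ℝ) 1 := ⟨h0, le_trans hab h1⟩
    have hmem : ∀ x ∈ Set.uIoc a b, x ∈ Set.Icc (0:ℝ) 1 ∧ |x - a| < δ := by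
      intro x hx
      rw [Set.uIoc_of_le hab] at hx
      refine ⟨hsub i hi ⟨hx.1.le, hx.2⟩, ?_⟩
      rw [abs_of_nonneg (by linarith [hx.1])]
      have : x - a ≤ 1/n := by
        have := hx.2
        linarith [hlen]
      linarith
    have genest : ∀ (φ : ℝ → ℝ) (δ' : ℝ), δ ≤ δ' →
        (∀ x ∈ Set.Icc (0:ℝ) 1, ∀ y ∈ Set.Icc (0:ℝ) 1, dist x y < δ' → dist (φ x) (φ y) < e) →
        IntervalIntegrable φ volume a b →
        |(∫ x in a..b, φ x) - φ a * (1/n)| ≤ e * (1/n) := by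
      intro φ δ' hδ' Hφ hφint
      have heq : (∫ x in a..b, φ x) - φ a * (1/n) = ∫ x in a..b, (φ x - φ a) := by
        rw [intervalIntegral.integral_sub hφint intervalIntegrable_const,
          intervalIntegral.integral_const, smul_eq_mul, hlen]
        ring
      rw [heq, ← Real.norm_eq_abs]
      have hb := intervalIntegral.norm_integral_le_of_norm_le_const
        (f := fun x => φ x - φ a) (C := e) (a := a) (b := b) (fun x hx => by
          obtain ⟨hx1, hx2⟩ := hmem x hx
          have := Hφ x hx1 a haI (by rw [Real.dist_eq]; exact lt_of_lt_of_le hx2 hδ')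
          rw [Real.norm_eq_abs, ← Real.dist_eq]
          exact this.le)
      calc ‖∫ x in a..b, (φ x - φ a)‖ ≤ e * |b - a| := hb
        _ = e * (1/n) := by rw [hlen, abs_of_nonneg (by positivity)]
    have estF := genest f δ₁ (min_le_left _ _) Hf (hfint i hi)
    have estG := genest g δ₂ ((min_le_right _ _).trans (min_le_left _ _)) Hg (hgint i hi)
    have estH := genest h δ₃ ((min_le_right _ _).trans (min_le_right _ _)) Hh (hhint i hi)
    have estGm : m * (1/n) ≤ ∫ x in a..b, g x := by
      have hmono : (∫ x in a..b, (fun _ : ℝ => m) x) ≤ ∫ x in a..b, g x :=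
        intervalIntegral.integral_mono_on hab intervalIntegrable_const (hgint i hi)
          (fun x hx => hx0min x (hsub i hi hx))
      rw [intervalIntegral.integral_const, smul_eq_mul, hlen, mul_comm] at hmono
      exact hmono
    have estH' : |(∫ x in a..b, h x) - (f a) ^ 2 / (g a) * (1/n)| ≤ e * (1/n) := estH
    exact bin_est _ _ _ (f a) (g a) m M (1/n) e (by positivity) hm hM1
      (hfM a haI) (hgM a haI) (hx0min a haI) estGm he1 he0.le estF estG estH'
  rw [Real.dist_eq]
  have hIh : (∫ x in (0:ℝ)..1, (f x) ^ 2 / g x) = ∫ x in (0:ℝ)..1, h x := rfl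
  rw [hIh, hI, ← Finset.sum_sub_distrib]
  calc |∑ i ∈ Finset.range n,
        ((∫ x in ((i:ℝ)/n)..(((i:ℝ)+1)/n), f x) ^ 2 /
          (∫ x in ((i:ℝ)/n)..(((i:ℝ)+1)/n), g x) -
          (∫ x in ((i:ℝ)/n)..(((i:ℝ)+1)/n), h x))|
      ≤ ∑ i ∈ Finset.range n,
        |(∫ x in ((i:ℝ)/n)..(((i:ℝ)+1)/n), f x) ^ 2 /
          (∫ x in ((i:ℝ)/n)..(((i:ℝ)+1)/n), g x) -
          (∫ x in ((i:ℝ)/n)..(((i:ℝ)+1)/n), h x)| := Finset.abs_sum_le_sum_abs _ _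
    _ ≤ ∑ _i ∈ Finset.range n, K0 * (e * (1/n)) := Finset.sum_le_sum key
    _ = n * (K0 * (e * (1/n))) := by
        rw [Finset.sum_const, Finset.card_range, nsmul_eq_mul]
    _ = K0 * e := by field_simp
    _ ≤ ε / 2 := heK
    _ < ε := by linarith
end

section
/- Let h: ℝ → ℝ be twice continuously differentiable and let x0 ∈ (0,1). For d > 0 set x1 := x0 − d/2, x2 := x0 + d/2, and for n ∈ ℕ and i ∈ {1,…,n} set Δ_i := ∫_{(i−1)/n}^{i/n} [ (1/2)h(x−x1) + (1/2)h(x−x2) − h(x−x0) ] dx. Then (n/d⁴)·Σ_{i=1}^{n} Δ_i² → (1/64)·∫_0^1 h''(x−x0)² dx as n → ∞ and d → 0; precisely, for every ε > 0 there exist N ∈ ℕ and δ > 0 such that for all n ≥ N and all 0 < d < δ, | (n/d⁴)·Σ_{i=1}^{n} Δ_i² − (1/64)·∫_0^1 h''(x−x0)² dx | ≤ ε. -/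
open MeasureTheory Filter Set

lemma taylor2 {f : ℝ → ℝ} (hf : ContDiff ℝ 2 f) (a t : ℝ) (ht : 0 < t) :
    ∃ ξ ∈ Set.Ioo a (a + t),
      f (a + t) = f a + deriv f a * t + deriv (deriv f) ξ * t ^ 2 / 2 := by
  have hx : a < a + t := by linarith
  have hd1 : Differentiable ℝ f := hf.differentiable (by norm_num)
  have hfd : ContDiff ℝ 1 (deriv f) := (contDiff_succ_iff_deriv.mp (by exact_mod_cast hf)).2.2
  have hd2 : Differentiable ℝ (deriv f) := hfd.differentiable (by norm_num)
  have h1 : ∀ y ∈ Ioo a (a + t), iteratedDerivWithin 1 f (Icc a (a + t)) y = deriv f y := by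
    intro y hy
    rw [iteratedDerivWithin_one,
      derivWithin_of_mem_nhds (Icc_mem_nhds hy.1 hy.2)]
  have hf' : DifferentiableOn ℝ (iteratedDerivWithin 1 f (Icc a (a + t))) (Ioo a (a + t)) :=
    DifferentiableOn.congr (hd2.differentiableOn) h1
  obtain ⟨ξ, hξ, heq⟩ := taylor_mean_remainder_lagrange (n := 1) hx.ne
    (by rw [uIcc_of_le hx.le]; exact hf.contDiffOn.of_le (by norm_num))
    (by rw [uIcc_of_le hx.le, uIoo_of_le hx.le]; exact hf')
  rw [uIoo_of_le hx.le] at hξ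
  rw [uIcc_of_le hx.le] at heq
  refine ⟨ξ, hξ, ?_⟩
  have h2 : iteratedDerivWithin 2 f (Icc a (a + t)) ξ = deriv (deriv f) ξ := by
    rw [show (2 : ℕ) = 1 + 1 from rfl, iteratedDerivWithin_succ,
      derivWithin_of_mem_nhds (Icc_mem_nhds hξ.1 hξ.2)]
    exact Filter.EventuallyEq.deriv_eq
      (Filter.eventuallyEq_of_mem (Ioo_mem_nhds hξ.1 hξ.2) h1)
  rw [h2] at heq
  have ha : a ∈ Icc a (a + t) := by simp [le_of_lt hx]
  have h3 : taylorWithinEval f 1 (Icc a (a + t)) a (a + t) = f a + deriv f a * t := by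
    rw [taylorWithinEval_succ, taylor_within_zero_eval,
      iteratedDerivWithin_one,
      (hd1 a).derivWithin ((uniqueDiffOn_Icc hx) a ha)]
    simp [smul_eq_mul]
    ring
  rw [h3] at heq
  have : (a + t - a) = t := by ring
  rw [this] at heq
  norm_num at heq
  linarith

lemma taylor2' {f : ℝ → ℝ} (hf : ContDiff ℝ 2 f) (a t : ℝ) (ht : 0 < t) :
    ∃ ξ ∈ Set.Ioo (a - t) a,
      f (a - t) = f a - deriv f a * t + deriv (deriv f) ξ * t ^ 2 / 2 := by
  set r : ℝ → ℝ := fun x => f (2 * a - x) with hr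
  have hrC : ContDiff ℝ 2 r := hf.comp (contDiff_const.sub contDiff_id)
  have hdr : ∀ y, deriv r y = -deriv f (2 * a - y) := fun y => deriv_comp_const_sub f (2*a) y
  have hddr : ∀ y, deriv (deriv r) y = deriv (deriv f) (2 * a - y) := by
    intro y
    rw [funext hdr, deriv.fun_neg, deriv_comp_const_sub (deriv f) (2*a) y, neg_neg]
  obtain ⟨ξ, hξ, heq⟩ := taylor2 hrC a t ht
  refine ⟨2 * a - ξ, ⟨by cases hξ; linarith, by cases hξ; linarith⟩, ?_⟩
  have h1 : r (a + t) = f (a - t) := by rw [hr]; ring_nf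
  have h2 : r a = f a := by rw [hr]; ring_nf
  rw [h1, h2, hdr, hddr] at heq
  rw [heq]
  ring_nf

lemma symdiff {f : ℝ → ℝ} (hf : ContDiff ℝ 2 f) (a t : ℝ) (ht : 0 < t) :
    ∃ ξ₁ ∈ Set.Ioo a (a + t), ∃ ξ₂ ∈ Set.Ioo (a - t) a,
      (1/2) * f (a + t) + (1/2) * f (a - t) - f a
        = (deriv (deriv f) ξ₁ + deriv (deriv f) ξ₂) * t ^ 2 / 4 := by
  obtain ⟨ξ₁, hξ₁, h1⟩ := taylor2 hf a t ht
  obtain ⟨ξ₂, hξ₂, h2⟩ := taylor2' hf a t ht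
  exact ⟨ξ₁, hξ₁, ξ₂, hξ₂, by rw [h1, h2]; ring⟩

set_option maxHeartbeats 1000000 in
theorem stmt6 (h : ℝ → ℝ) (hC2 : ContDiff ℝ 2 h)
    (x0 : ℝ) (hx0 : x0 ∈ Set.Ioo (0 : ℝ) 1) :
    ∀ ε > (0 : ℝ), ∃ N : ℕ, ∃ δ > (0 : ℝ), ∀ n : ℕ, N ≤ n → ∀ d : ℝ, 0 < d → d < δ →
      |((n : ℝ) / d ^ 4) * ∑ i ∈ Finset.range n,
          (∫ x in ((i : ℝ) / n)..(((i : ℝ) + 1) / n),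
            ((1 / 2) * h (x - (x0 - d / 2)) + (1 / 2) * h (x - (x0 + d / 2))
              - h (x - x0))) ^ 2
        - (1 / 64) * ∫ x in (0 : ℝ)..1, (deriv (deriv h) (x - x0)) ^ 2| ≤ ε := by
  intro ε hε
  obtain ⟨hx0a, hx0b⟩ := hx0
  have hfd : ContDiff ℝ 1 (deriv h) := (contDiff_succ_iff_deriv.mp (by exact_mod_cast hC2)).2.2
  have hg : Continuous (deriv (deriv h)) := hfd.continuous_deriv le_rfl
  have hh : Continuous h := hC2.continuous
  set g : ℝ → ℝ := deriv (deriv h) with hgdef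
  obtain ⟨C, hC⟩ := (isCompact_Icc (a := (-2:ℝ)) (b := 2)).exists_bound_of_continuousOn
    hg.continuousOn
  set M : ℝ := max C 0 with hMdef
  have hM0 : 0 ≤ M := le_max_right _ _
  have hMb : ∀ y ∈ Icc (-2:ℝ) 2, |g y| ≤ M := fun y hy =>
    le_trans (le_of_eq (Real.norm_eq_abs _).symm) (le_trans (hC y hy) (le_max_left _ _))
  have hUC := (isCompact_Icc (a := (-2:ℝ)) (b := 2)).uniformContinuousOn_of_continuous
    hg.continuousOn
  rw [Metric.uniformContinuousOn_iff] at hUC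
  set ε₁ : ℝ := min 1 (32 * ε / (2 * M + 1)) with hε₁def
  have hε₁pos : 0 < ε₁ := lt_min one_pos (by positivity)
  obtain ⟨δ₁, hδ₁pos, hδ₁⟩ := hUC ε₁ hε₁pos
  set ε₂ : ℝ := Real.sqrt (ε / 2) with hε₂def
  have hε₂pos : 0 < ε₂ := Real.sqrt_pos.mpr (by linarith)
  obtain ⟨δ₂, hδ₂pos, hδ₂⟩ := hUC ε₂ hε₂pos
  refine ⟨⌈1/δ₂⌉₊ + 1, min δ₁ 1, lt_min hδ₁pos one_pos, ?_⟩
  intro n hn d hd hdδ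
  have hn1 : 1 ≤ n := le_trans (Nat.le_add_left 1 _) hn
  have hnR : (1:ℝ) ≤ (n:ℝ) := by exact_mod_cast hn1
  have hnpos : (0:ℝ) < (n:ℝ) := by linarith
  have hinvn : 1 / (n:ℝ) < δ₂ := by
    rw [div_lt_iff₀ hnpos]
    have h1 : (1:ℝ)/δ₂ ≤ (⌈1/δ₂⌉₊ : ℝ) := Nat.le_ceil _
    have h2 : ((⌈1/δ₂⌉₊ + 1 : ℕ) : ℝ) ≤ (n:ℝ) := by exact_mod_cast hn
    push_cast at h2
    calc (1:ℝ) = δ₂ * (1/δ₂) := by field_simp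
    _ < δ₂ * n := by
        apply mul_lt_mul_of_pos_left _ hδ₂pos
        linarith
  have hd1 : d ≤ 1 := le_of_lt (lt_of_lt_of_le hdδ (min_le_right _ _))
  have hdδ₁ : d < δ₁ := lt_of_lt_of_le hdδ (min_le_left _ _)
  set H : ℝ → ℝ := fun x => g (x - x0) with hHdef
  have hHc : Continuous H := hg.comp (continuous_id.sub continuous_const)
  have hHm : ∀ x ∈ Icc (0:ℝ) 1, x - x0 ∈ Icc (-2:ℝ) 2 := by
    intro x hx
    obtain ⟨hx1, hx2⟩ := hx
    constructor <;> simp <;> linarith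
  have hHb : ∀ x ∈ Icc (0:ℝ) 1, |H x| ≤ M := fun x hx => hMb _ (hHm x hx)
  set G : ℝ → ℝ := fun x =>
    (1 / 2) * h (x - (x0 - d / 2)) + (1 / 2) * h (x - (x0 + d / 2)) - h (x - x0) with hGdef
  have hGc : Continuous G := by
    apply Continuous.sub
    apply Continuous.add
    · exact continuous_const.mul (hh.comp (continuous_id.sub continuous_const))
    · exact continuous_const.mul (hh.comp (continuous_id.sub continuous_const))
    · exact hh.comp (continuous_id.sub continuous_const)
  -- pointwise Taylor bound
  have hptw : ∀ x ∈ Icc (0:ℝ) 1, |G x - d^2/8 * H x| ≤ d^2/8 * ε₁ := by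
    intro x hx
    obtain ⟨hx1, hx2⟩ := hx
    have ht : (0:ℝ) < d/2 := by linarith
    obtain ⟨ξ₁, hξ₁, ξ₂, hξ₂, heq⟩ := symdiff hC2 (x - x0) (d/2) ht
    obtain ⟨hξ₁a, hξ₁b⟩ := hξ₁
    obtain ⟨hξ₂a, hξ₂b⟩ := hξ₂
    have e1 : x - (x0 - d/2) = (x - x0) + d/2 := by ring
    have e2 : x - (x0 + d/2) = (x - x0) - d/2 := by ring
    have hGval : G x = (g ξ₁ + g ξ₂) * (d/2)^2 / 4 := by
      simp only [hGdef]
      rw [e1, e2]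
      exact heq
    have hamem : x - x0 ∈ Icc (-2:ℝ) 2 := hHm x ⟨hx1, hx2⟩
    have hax := Set.mem_Icc.mp hamem
    have hξ₁mem : ξ₁ ∈ Icc (-2:ℝ) 2 := Set.mem_Icc.mpr ⟨by linarith, by linarith⟩
    have hξ₂mem : ξ₂ ∈ Icc (-2:ℝ) 2 := Set.mem_Icc.mpr ⟨by linarith, by linarith⟩
    have hb1 : |g ξ₁ - g (x - x0)| ≤ ε₁ := by
      have := hδ₁ ξ₁ hξ₁mem (x - x0) hamem (by rw [Real.dist_eq]; rw [abs_lt]; constructor <;> linarith)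
      rw [Real.dist_eq] at this
      linarith
    have hb2 : |g ξ₂ - g (x - x0)| ≤ ε₁ := by
      have := hδ₁ ξ₂ hξ₂mem (x - x0) hamem (by rw [Real.dist_eq]; rw [abs_lt]; constructor <;> linarith)
      rw [Real.dist_eq] at this
      linarith
    have hre : G x - d^2/8 * H x
        = ((g ξ₁ - g (x - x0)) + (g ξ₂ - g (x - x0))) * d^2/16 := by
      rw [hGval, hHdef]
      ring
    rw [hre]
    have habs : |((g ξ₁ - g (x - x0)) + (g ξ₂ - g (x - x0)))| ≤ 2 * ε₁ :=
      le_trans (abs_add_le _ _) (by linarith)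
    have hre2 : |((g ξ₁ - g (x - x0)) + (g ξ₂ - g (x - x0))) * d^2/16|
        = |((g ξ₁ - g (x - x0)) + (g ξ₂ - g (x - x0)))| * (d^2/16) := by
      rw [abs_div, abs_mul, abs_of_nonneg (by positivity : (0:ℝ) ≤ d^2),
        abs_of_nonneg (by norm_num : (0:ℝ) ≤ (16:ℝ))]
      ring
    rw [hre2]
    have := mul_le_mul_of_nonneg_right habs (by positivity : (0:ℝ) ≤ d^2/16)
    linarith
  set A : ℕ → ℝ := fun i => ∫ x in ((i:ℝ)/n)..(((i:ℝ)+1)/n), H x with hAdef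
  set E : ℕ → ℝ := fun i => ∫ x in ((i:ℝ)/n)..(((i:ℝ)+1)/n), (H x)^2 with hEdef
  set Δ : ℕ → ℝ := fun i => ∫ x in ((i:ℝ)/n)..(((i:ℝ)+1)/n), G x with hΔdef
  have hbinfacts : ∀ i ∈ Finset.range n, (0:ℝ) ≤ (i:ℝ)/n ∧ ((i:ℝ)+1)/n ≤ 1 ∧
      (i:ℝ)/n ≤ ((i:ℝ)+1)/n ∧ (((i:ℝ)+1)/n) - (i:ℝ)/n = 1/n ∧
      Set.uIoc ((i:ℝ)/n) (((i:ℝ)+1)/n) ⊆ Icc (0:ℝ) 1 := by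
    intro i hi
    have hiR : ((i:ℝ) + 1) ≤ (n:ℝ) := by
      have : (i:ℕ) + 1 ≤ n := Finset.mem_range.mp hi
      exact_mod_cast this
    have hL0 : (0:ℝ) ≤ (i:ℝ)/n := by positivity
    have hR1 : ((i:ℝ)+1)/n ≤ 1 := by rw [div_le_one hnpos]; exact hiR
    have hLR : (i:ℝ)/n ≤ ((i:ℝ)+1)/n := by
      gcongr
      linarith
    have hlen : (((i:ℝ)+1)/n) - (i:ℝ)/n = 1/n := by field_simp; ring
    refine ⟨hL0, hR1, hLR, hlen, ?_⟩
    rw [Set.uIoc_of_le hLR]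
    exact (Set.Ioc_subset_Icc_self).trans (Set.Icc_subset_Icc hL0 hR1)
  have hkey1 : ∀ i ∈ Finset.range n, |Δ i ^ 2 - d^4/64 * (A i)^2|
      ≤ d^4/64 * (ε₁ * (ε₁ + 2*M)) * (1/(n:ℝ)^2) := by
    intro i hi
    obtain ⟨hL0, hR1, hLR, hlen, hsub⟩ := hbinfacts i hi
    have habslen : |(((i:ℝ)+1)/n) - (i:ℝ)/n| = 1/n := by
      rw [hlen]; exact abs_of_nonneg (by positivity)
    have hΔA : |Δ i - d^2/8 * A i| ≤ (d^2/8*ε₁) * (1/n) := by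
      have hrepr : (∫ x in ((i:ℝ)/n)..(((i:ℝ)+1)/n), (G x - d^2/8 * H x))
          = Δ i - d^2/8 * A i := by
        rw [intervalIntegral.integral_sub (f := G) (g := fun x => d^2/8 * H x) (hGc.intervalIntegrable _ _)
          (((continuous_const.mul hHc)).intervalIntegrable _ _),
          intervalIntegral.integral_const_mul]
      rw [← hrepr, ← Real.norm_eq_abs, ← habslen]
      apply intervalIntegral.norm_integral_le_of_norm_le_const
      intro x hx
      rw [Real.norm_eq_abs]
      exact hptw x (hsub hx)
    have hAb : |A i| ≤ M * (1/n) := by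
      simp only [hAdef]
      rw [← Real.norm_eq_abs, ← habslen]
      apply intervalIntegral.norm_integral_le_of_norm_le_const
      intro x hx
      rw [Real.norm_eq_abs]
      exact hHb x (hsub hx)
    have hfac : Δ i^2 - d^4/64*(A i)^2 = (Δ i - d^2/8*A i) * (Δ i + d^2/8*A i) := by ring
    rw [hfac, abs_mul]
    have h2 : |Δ i + d^2/8*A i| ≤ d^2/8*(ε₁+2*M) * (1/n) := by
      have t1 : |Δ i + d^2/8*A i| ≤ |Δ i - d^2/8*A i| + 2*(d^2/8)*|A i| := by
        have : Δ i + d^2/8*A i = (Δ i - d^2/8*A i) + 2*(d^2/8)*A i := by ring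
        rw [this]
        refine le_trans (abs_add_le _ _) ?_
        rw [abs_mul, abs_of_nonneg (by positivity : (0:ℝ) ≤ 2*(d^2/8))]
      have t2 : 2*(d^2/8)*|A i| ≤ 2*(d^2/8)*(M*(1/n)) :=
        mul_le_mul_of_nonneg_left hAb (by positivity)
      calc |Δ i + d^2/8*A i| ≤ (d^2/8*ε₁)*(1/n) + 2*(d^2/8)*(M*(1/n)) := by linarith
      _ = d^2/8*(ε₁+2*M) * (1/n) := by ring
    calc |Δ i - d^2/8*A i| * |Δ i + d^2/8*A i|
        ≤ ((d^2/8*ε₁)*(1/n)) * (d^2/8*(ε₁+2*M) * (1/n)) :=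
          mul_le_mul hΔA h2 (abs_nonneg _) (by positivity)
    _ = d^4/64 * (ε₁*(ε₁+2*M)) * (1/(n:ℝ)^2) := by ring
  have hsum1 : |∑ i ∈ Finset.range n, Δ i^2 - d^4/64 * ∑ i ∈ Finset.range n, (A i)^2|
      ≤ d^4/64 * (ε₁*(ε₁+2*M)) * (1/n) := by
    rw [Finset.mul_sum, ← Finset.sum_sub_distrib]
    refine le_trans (Finset.abs_sum_le_sum_abs _ _) ?_
    refine le_trans (Finset.sum_le_sum hkey1) ?_
    rw [Finset.sum_const, Finset.card_range, nsmul_eq_mul]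
    rw [show (1:ℝ)/(n:ℝ)^2 = (1/n)*(1/n) by ring]
    have : (n:ℝ) * (d^4/64 * (ε₁*(ε₁+2*M)) * ((1/n)*(1/n)))
        = (n * (1/n)) * (d^4/64 * (ε₁*(ε₁+2*M)) * (1/n)) := by ring
    rw [this, mul_one_div, div_self (ne_of_gt hnpos), one_mul]
  have hmain1 : |((n:ℝ)/d^4) * ∑ i ∈ Finset.range n, Δ i^2
      - ((n:ℝ)/64) * ∑ i ∈ Finset.range n, (A i)^2| ≤ ε/2 := by
    have hd4 : (0:ℝ) < d^4 := by positivity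
    have heqq : ((n:ℝ)/d^4) * ∑ i ∈ Finset.range n, Δ i^2
        - ((n:ℝ)/64) * ∑ i ∈ Finset.range n, (A i)^2
        = ((n:ℝ)/d^4) * (∑ i ∈ Finset.range n, Δ i^2
          - d^4/64 * ∑ i ∈ Finset.range n, (A i)^2) := by
      field_simp
    rw [heqq, abs_mul, abs_of_nonneg (by positivity : (0:ℝ) ≤ (n:ℝ)/d^4)]
    have step : ((n:ℝ)/d^4) * |∑ i ∈ Finset.range n, Δ i^2
        - d^4/64 * ∑ i ∈ Finset.range n, (A i)^2|
        ≤ ((n:ℝ)/d^4) * (d^4/64 * (ε₁*(ε₁+2*M)) * (1/n)) :=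
      mul_le_mul_of_nonneg_left hsum1 (by positivity)
    have heq2 : ((n:ℝ)/d^4) * (d^4/64 * (ε₁*(ε₁+2*M)) * (1/n)) = ε₁*(ε₁+2*M)/64 := by
      field_simp
    rw [heq2] at step
    refine le_trans step ?_
    have hA1 : ε₁ ≤ 1 := min_le_left _ _
    have hA2 : ε₁ ≤ 32*ε/(2*M+1) := min_le_right _ _
    have hA3 : ε₁*(2*M+1) ≤ 32*ε := by
      rw [← le_div_iff₀ (by positivity : (0:ℝ) < 2*M+1)]
      exact hA2
    have hA4 : ε₁*ε₁ ≤ 1*ε₁ := mul_le_mul_of_nonneg_right hA1 hε₁pos.le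
    linarith [hA4, hA3]
  have hkey2 : ∀ i ∈ Finset.range n, |(n:ℝ) * (A i)^2 - E i| ≤ ε₂^2 * (1/n) := by
    intro i hi
    obtain ⟨hL0, hR1, hLR, hlen, hsub⟩ := hbinfacts i hi
    have habslen : |(((i:ℝ)+1)/n) - (i:ℝ)/n| = 1/n := by
      rw [hlen]; exact abs_of_nonneg (by positivity)
    have hIccsub : Icc ((i:ℝ)/n) (((i:ℝ)+1)/n) ⊆ Icc (0:ℝ) 1 := Set.Icc_subset_Icc hL0 hR1
    have havg : ∀ x ∈ Set.uIoc ((i:ℝ)/n) (((i:ℝ)+1)/n), |H x - (n:ℝ) * A i| ≤ ε₂ := by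
      intro x hx
      have hxIcc : x ∈ Icc ((i:ℝ)/n) (((i:ℝ)+1)/n) := by
        rw [Set.uIoc_of_le hLR] at hx
        exact Set.Ioc_subset_Icc_self hx
      have hx01 : x ∈ Icc (0:ℝ) 1 := hIccsub hxIcc
      have hbnd : |∫ y in ((i:ℝ)/n)..(((i:ℝ)+1)/n), (H x - H y)| ≤ ε₂ * (1/n) := by
        rw [← Real.norm_eq_abs, ← habslen]
        apply intervalIntegral.norm_integral_le_of_norm_le_const
        intro y hy
        have hyIcc : y ∈ Icc ((i:ℝ)/n) (((i:ℝ)+1)/n) := by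
          rw [Set.uIoc_of_le hLR] at hy
          exact Set.Ioc_subset_Icc_self hy
        have hy01 : y ∈ Icc (0:ℝ) 1 := hIccsub hyIcc
        have hdist : dist (x - x0) (y - x0) < δ₂ := by
          rw [Real.dist_eq]
          have heqd : x - x0 - (y - x0) = x - y := by ring
          rw [heqd]
          have hxy : |x - y| ≤ 1/(n:ℝ) := by
            rw [abs_le]
            constructor
            · have := hxIcc.1; have := hyIcc.2; linarith
            · have := hxIcc.2; have := hyIcc.1; linarith
          linarith
        have := hδ₂ (x - x0) (hHm x hx01) (y - x0) (hHm y hy01) hdist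
        rw [Real.dist_eq] at this
        rw [Real.norm_eq_abs]
        simp only [hHdef]
        linarith
      have hrepr2 : (∫ y in ((i:ℝ)/n)..(((i:ℝ)+1)/n), (H x - H y))
          = (1/n) * H x - A i := by
        rw [intervalIntegral.integral_sub (intervalIntegrable_const)
          (hHc.intervalIntegrable _ _), intervalIntegral.integral_const, hlen,
          smul_eq_mul]
      have hHx : H x - (n:ℝ) * A i
          = n * (∫ y in ((i:ℝ)/n)..(((i:ℝ)+1)/n), (H x - H y)) := by
        rw [hrepr2]
        field_simp
      rw [hHx, abs_mul, abs_of_nonneg hnpos.le]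
      calc (n:ℝ) * |∫ y in ((i:ℝ)/n)..(((i:ℝ)+1)/n), (H x - H y)|
          ≤ (n:ℝ) * (ε₂ * (1/n)) := mul_le_mul_of_nonneg_left hbnd hnpos.le
      _ = ε₂ * ((n:ℝ) * (1/n)) := by ring
      _ = ε₂ := by rw [mul_one_div, div_self (ne_of_gt hnpos), mul_one]
    have hiden : E i - (n:ℝ) * (A i)^2
        = ∫ x in ((i:ℝ)/n)..(((i:ℝ)+1)/n), (H x - (n:ℝ)*A i)^2 := by
      have hint1 : (∫ x in ((i:ℝ)/n)..(((i:ℝ)+1)/n),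
          ((H x)^2 - (2*((n:ℝ)*A i))*(H x) + ((n:ℝ)*A i)^2))
          = E i - (2*((n:ℝ)*A i))*A i + ((n:ℝ)*A i)^2 * (1/n) := by
        rw [intervalIntegral.integral_add (f := fun x => (H x)^2 - (2*((n:ℝ)*A i))*(H x))
          (((hHc.pow 2).sub (continuous_const.mul hHc)).intervalIntegrable _ _)
          (intervalIntegrable_const),
          intervalIntegral.integral_sub (f := fun x => (H x)^2) (g := fun x => (2*((n:ℝ)*A i))*(H x))
          ((hHc.pow 2).intervalIntegrable _ _)
          ((continuous_const.mul hHc).intervalIntegrable _ _),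
          intervalIntegral.integral_const_mul, intervalIntegral.integral_const,
          hlen, smul_eq_mul]
        simp only [hEdef, hAdef]
        ring
      have hfe : (fun x => ((H x)^2 - (2*((n:ℝ)*A i))*(H x) + ((n:ℝ)*A i)^2))
          = (fun x => (H x - (n:ℝ)*A i)^2) := funext (fun x => by ring)
      rw [hfe] at hint1
      rw [hint1]
      have hnn : (n:ℝ) ≠ 0 := ne_of_gt hnpos
      field_simp
      ring
    have : |(n:ℝ) * (A i)^2 - E i|
        = |∫ x in ((i:ℝ)/n)..(((i:ℝ)+1)/n), (H x - (n:ℝ)*A i)^2| := by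
      rw [abs_sub_comm, hiden]
    rw [this, ← Real.norm_eq_abs, ← habslen]
    apply intervalIntegral.norm_integral_le_of_norm_le_const
    intro x hx
    rw [Real.norm_eq_abs, abs_pow]
    exact pow_le_pow_left₀ (abs_nonneg _) (havg x hx) 2
  have hnn : (n:ℝ) ≠ 0 := ne_of_gt hnpos
  have hsumE : ∑ i ∈ Finset.range n, E i = ∫ x in (0:ℝ)..1, (H x)^2 := by
    have hadj := intervalIntegral.sum_integral_adjacent_intervals
      (a := fun k : ℕ => (k:ℝ)/(n:ℝ)) (μ := MeasureTheory.volume)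
      (f := fun x => (H x)^2) (n := n)
      (fun k hk => (hHc.pow 2).intervalIntegrable _ _)
    push_cast at hadj
    rw [zero_div, div_self hnn] at hadj
    simp only [hEdef]
    exact hadj
  have hmain2 : |(n:ℝ) * (∑ i ∈ Finset.range n, (A i)^2)
      - ∫ x in (0:ℝ)..1, (H x)^2| ≤ ε/2 := by
    rw [← hsumE, Finset.mul_sum, ← Finset.sum_sub_distrib]
    refine le_trans (Finset.abs_sum_le_sum_abs _ _) ?_
    refine le_trans (Finset.sum_le_sum hkey2) ?_
    rw [Finset.sum_const, Finset.card_range, nsmul_eq_mul]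
    rw [show (n:ℝ) * (ε₂^2 * (1/n)) = ε₂^2 * ((n:ℝ)*(1/n)) from by ring,
      mul_one_div, div_self hnn, mul_one, hε₂def,
      Real.sq_sqrt (by linarith : (0:ℝ) ≤ ε/2)]
  have hfinal : ((n:ℝ)/d^4) * (∑ i ∈ Finset.range n, Δ i^2)
      - (1/64) * (∫ x in (0:ℝ)..1, (H x)^2)
      = (((n:ℝ)/d^4) * ∑ i ∈ Finset.range n, Δ i^2
        - ((n:ℝ)/64) * ∑ i ∈ Finset.range n, (A i)^2)
      + (1/64) * ((n:ℝ) * (∑ i ∈ Finset.range n, (A i)^2)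
        - ∫ x in (0:ℝ)..1, (H x)^2) := by ring
  have habs : |((n:ℝ)/d^4) * (∑ i ∈ Finset.range n, Δ i^2)
      - (1/64) * (∫ x in (0:ℝ)..1, (H x)^2)| ≤ ε := by
    rw [hfinal]
    refine le_trans (abs_add_le _ _) ?_
    rw [abs_mul, abs_of_nonneg (by norm_num : (0:ℝ) ≤ 1/64)]
    have := hmain2
    nlinarith [hmain1, hmain2, hε, abs_nonneg ((n:ℝ) * (∑ i ∈ Finset.range n, (A i)^2)
        - ∫ x in (0:ℝ)..1, (H x)^2)]
  exact habs
end

section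
/- Let h: ℝ → ℝ be four times continuously differentiable with h(x) > 0 for all x, and let x0 ∈ (0,1). For d > 0 set x1 := x0 − d/2, x2 := x0 + d/2, and for n ∈ ℕ and i ∈ {1,…,n} define p0i := ∫_{(i−1)/n}^{i/n} h(x−x0) dx and p1i := (1/2)∫_{(i−1)/n}^{i/n} h(x−x1) dx + (1/2)∫_{(i−1)/n}^{i/n} h(x−x2) dx. Then (1/d⁴)·Σ_{i=1}^{n} (√p1i − √p0i)² → (1/256)·∫_0^1 h''(x−x0)²/h(x−x0) dx as n → ∞ and d → 0; precisely, for every ε > 0 there exist N ∈ ℕ and δ > 0 such that for all n ≥ N and all 0 < d < δ, | (1/d⁴)·Σ_{i=1}^{n} (√p1i − √p0i)² − (1/256)·∫_0^1 h''(x−x0)²/h(x−x0) dx | ≤ ε. -/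
set_option maxHeartbeats 1000000
open MeasureTheory Filter

/-- Integral of `h (· - x0)` over the `i`-th of `n` bins of `[0,1]`. -/
noncomputable def binInt (h : ℝ → ℝ) (x0 : ℝ) (n i : ℕ) : ℝ :=
  ∫ x in ((i : ℝ) / n)..(((i : ℝ) + 1) / n), h (x - x0)

section aux
open Set

lemma taylor_sym (h : ℝ → ℝ) (hC4 : ContDiff ℝ 4 h) (M3 : ℝ)
    (hM3 : ∀ x ∈ Icc (-2:ℝ) 2, |deriv (deriv (deriv h)) x| ≤ M3)
    (u : ℝ) (hu : u ∈ Icc (-(3/2):ℝ) (3/2)) (s : ℝ) (hs : s ∈ Icc (0:ℝ) (1/2)) :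
    |(h (u+s) + h (u-s))/2 - h u - s^2/2 * deriv (deriv h) u| ≤ M3 * s^3 := by
  set h1 := deriv h with hh1
  set h2 := deriv h1 with hh2
  set h3 := deriv h2 with hh3
  have hd0 : Differentiable ℝ h := hC4.differentiable (by norm_num)
  have hc1 : ContDiff ℝ 3 h1 := ((contDiff_succ_iff_deriv (n := 3)).mp (by norm_num1; exact hC4)).2.2
  have hc2 : ContDiff ℝ 2 h2 := ((contDiff_succ_iff_deriv (n := 2)).mp (by norm_num1; exact hc1)).2.2
  have hd1 : Differentiable ℝ h1 := hc1.differentiable (by norm_num)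
  have hd2 : Differentiable ℝ h2 := hc2.differentiable (by norm_num)
  -- generic derivative of symmetric sum
  have Dplus : ∀ (g : ℝ → ℝ), Differentiable ℝ g → ∀ t : ℝ,
      HasDerivAt (fun r => g (u + r)) (deriv g (u + t)) t := by
    intro g hg t
    simpa [Function.comp_def] using (hg (u + t)).hasDerivAt.comp t ((hasDerivAt_id t).const_add u)
  have Dminus : ∀ (g : ℝ → ℝ), Differentiable ℝ g → ∀ t : ℝ,
      HasDerivAt (fun r => g (u - r)) (-(deriv g (u - t))) t := by
    intro g hg t
    simpa [mul_comm, Function.comp_def] using (hg (u - t)).hasDerivAt.comp t ((hasDerivAt_id t).const_sub u)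
  set ψ : ℝ → ℝ := fun t => (h (u+t) + h (u-t))/2 - h u - t^2/2 * h2 u with hψ
  set ψ' : ℝ → ℝ := fun t => (h1 (u+t) - h1 (u-t))/2 - t * h2 u with hψ'
  set ψ'' : ℝ → ℝ := fun t => (h2 (u+t) + h2 (u-t))/2 - h2 u with hψ''
  have hDψ : ∀ t : ℝ, HasDerivAt ψ (ψ' t) t := by
    intro t
    have H1 := ((Dplus h hd0 t).add (Dminus h hd0 t)).div_const 2
    have H2 : HasDerivAt (fun r : ℝ => r^2/2 * h2 u) (t * h2 u) t := by
      have := ((hasDerivAt_pow 2 t).div_const 2).mul_const (h2 u)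
      simpa [mul_comm, mul_assoc] using this
    have := (H1.sub_const (h u)).sub H2
    refine this.congr_deriv ?_
    all_goals simp only [hψ', hh1]
    all_goals ring
  have hDψ' : ∀ t : ℝ, HasDerivAt ψ' (ψ'' t) t := by
    intro t
    have H1 := ((Dplus h1 hd1 t).sub (Dminus h1 hd1 t)).div_const 2
    have H2 : HasDerivAt (fun r : ℝ => r * h2 u) (h2 u) t := by
      simpa using (hasDerivAt_id t).mul_const (h2 u)
    have := H1.sub H2
    refine this.congr_deriv ?_
    all_goals simp only [hψ'', hh2]
    all_goals ring
  have hDψ'' : ∀ t : ℝ, HasDerivAt ψ'' (((h3 (u+t) - h3 (u-t)))/2) t := by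
    intro t
    have H1 := ((Dplus h2 hd2 t).add (Dminus h2 hd2 t)).div_const 2
    have := H1.sub_const (h2 u)
    refine this.congr_deriv ?_
    all_goals simp only [hh3]
    all_goals ring
  obtain ⟨hs0, hs12⟩ := hs
  obtain ⟨hul, huu⟩ := hu
  have hmem : ∀ t ∈ Icc (0:ℝ) s, (u + t) ∈ Icc (-2:ℝ) 2 ∧ (u - t) ∈ Icc (-2:ℝ) 2 := by
    intro t ht
    obtain ⟨ht0, hts⟩ := ht
    constructor <;> constructor <;> nlinarith
  have hM3nn : 0 ≤ M3 := le_trans (abs_nonneg _) (hM3 0 (by norm_num))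
  -- step 1 : |ψ'' t| ≤ M3 * s on [0,s]
  have step1 : ∀ t ∈ Icc (0:ℝ) s, |ψ'' t| ≤ M3 * s := by
    intro t ht
    have key := Convex.norm_image_sub_le_of_norm_hasDerivWithin_le
      (f := ψ'') (f' := fun τ => (h3 (u+τ) - h3 (u-τ))/2) (s := Icc (0:ℝ) s) (C := M3)
      (fun τ _ => (hDψ'' τ).hasDerivWithinAt)
      (fun τ hτ => by
        obtain ⟨h1', h2'⟩ := hmem τ hτ
        have b1 := hM3 _ h1'
        have b2 := hM3 _ h2'
        rw [hh3] at b1 b2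
        rw [Real.norm_eq_abs]
        rw [abs_div, abs_two]
        have htri : |deriv h2 (u+τ) - deriv h2 (u-τ)| ≤ |deriv h2 (u+τ)| + |deriv h2 (u-τ)| := abs_sub _ _
        linarith)
      (convex_Icc 0 s) (left_mem_Icc.mpr hs0) ht
    have hψ''0 : ψ'' 0 = 0 := by simp [hψ'']
    rw [hψ''0, sub_zero, Real.norm_eq_abs, Real.norm_eq_abs] at key
    calc |ψ'' t| ≤ M3 * |t - 0| := key
      _ ≤ M3 * s := by
          rw [sub_zero, abs_of_nonneg ht.1]
          exact mul_le_mul_of_nonneg_left ht.2 hM3nn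
  -- step 2 : |ψ' t| ≤ M3 * s * s on [0,s]
  have step2 : ∀ t ∈ Icc (0:ℝ) s, |ψ' t| ≤ M3 * s * s := by
    intro t ht
    have key := Convex.norm_image_sub_le_of_norm_hasDerivWithin_le
      (f := ψ') (f' := ψ'') (s := Icc (0:ℝ) s) (C := M3 * s)
      (fun τ _ => (hDψ' τ).hasDerivWithinAt)
      (fun τ hτ => by rw [Real.norm_eq_abs]; exact step1 τ hτ)
      (convex_Icc 0 s) (left_mem_Icc.mpr hs0) ht
    have hψ'0 : ψ' 0 = 0 := by simp [hψ']
    rw [hψ'0, sub_zero, Real.norm_eq_abs, Real.norm_eq_abs] at key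
    calc |ψ' t| ≤ M3 * s * |t - 0| := key
      _ ≤ M3 * s * s := by
          rw [sub_zero, abs_of_nonneg ht.1]
          exact mul_le_mul_of_nonneg_left ht.2 (by positivity)
  -- step 3
  have key := Convex.norm_image_sub_le_of_norm_hasDerivWithin_le
    (f := ψ) (f' := ψ') (s := Icc (0:ℝ) s) (C := M3 * s * s)
    (fun τ _ => (hDψ τ).hasDerivWithinAt)
    (fun τ hτ => by rw [Real.norm_eq_abs]; exact step2 τ hτ)
    (convex_Icc 0 s) (left_mem_Icc.mpr hs0) (right_mem_Icc.mpr hs0)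
  have hψ0 : ψ 0 = 0 := by simp [hψ]
  rw [hψ0, sub_zero, Real.norm_eq_abs, Real.norm_eq_abs, sub_zero, abs_of_nonneg hs0] at key
  calc |(h (u+s) + h (u-s))/2 - h u - s^2/2 * h2 u| = |ψ s| := by simp [hψ]
    _ ≤ M3 * s * s * s := key
    _ = M3 * s^3 := by ring

lemma perbin (m M2 M3 n a b A d : ℝ)
    (hm : 0 < m) (hn : 1 ≤ n) (hd : 0 < d) (hd1 : d ≤ 1)
    (ha1 : m/n ≤ a) (hb1 : m/n ≤ b)
    (hA : |A| ≤ M2/n)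
    (hr : |b - a - d^2/8 * A| ≤ M3 * d^3/(8*n)) :
    |(Real.sqrt b - Real.sqrt a)^2 - d^4 * A^2/(256*a)|
      ≤ ((M2+M3)^3/m^2 + M3*(M2+M3)/m) * d^5 / n := by
  have hn0 : (0:ℝ) < n := lt_of_lt_of_le one_pos hn
  have hn0' : n ≠ 0 := ne_of_gt hn0
  have hmn : 0 < m/n := div_pos hm hn0
  have ha0 : 0 < a := lt_of_lt_of_le hmn ha1
  have hb0 : 0 < b := lt_of_lt_of_le hmn hb1
  have hM2 : 0 ≤ M2 := by
    by_contra hc; push_neg at hc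
    have : M2/n < 0 := div_neg_of_neg_of_pos hc hn0
    have := (abs_nonneg A).trans hA; linarith
  have hM3 : 0 ≤ M3 := by
    by_contra hc; push_neg at hc
    have : M3 * d^3 < 0 := mul_neg_of_neg_of_pos hc (by positivity)
    have : M3 * d^3/(8*n) < 0 := div_neg_of_neg_of_pos this (by positivity)
    have := (abs_nonneg _).trans hr; linarith
  set sa := Real.sqrt a with hsa
  set sb := Real.sqrt b with hsb
  have hsa2 : sa^2 = a := Real.sq_sqrt ha0.le
  have hsb2 : sb^2 = b := Real.sq_sqrt hb0.le
  have hsa0 : 0 < sa := Real.sqrt_pos.mpr ha0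
  have hsb0 : 0 < sb := Real.sqrt_pos.mpr hb0
  have hS : 0 < sa + sb := by linarith
  have hSsq : 4*(m/n) ≤ (sa+sb)^2 := by
    have h1 : Real.sqrt (m/n) ≤ sa := Real.sqrt_le_sqrt ha1
    have h2 : Real.sqrt (m/n) ≤ sb := Real.sqrt_le_sqrt hb1
    have h3 : (Real.sqrt (m/n))^2 = m/n := Real.sq_sqrt hmn.le
    nlinarith [Real.sqrt_nonneg (m/n)]
  have hdiff : sb - sa = (b - a)/(sa+sb) := by
    rw [eq_div_iff (ne_of_gt hS)]
    linear_combination hsb2 - hsa2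
  have hT : (sb - sa)^2 = (b-a)^2/((sa+sb)^2) := by rw [hdiff, div_pow]
  -- bound |b - a|
  have hba : |b - a| ≤ d^2*(M2+M3)/(8*n) := by
    have t1 : |b - a| ≤ |b - a - d^2/8*A| + |d^2/8*A| := by
      calc |b - a| = |(b - a - d^2/8*A) + d^2/8*A| := by ring_nf
        _ ≤ _ := abs_add_le _ _
    have t2 : |d^2/8*A| = d^2/8*|A| := by rw [abs_mul, abs_of_nonneg (by positivity : (0:ℝ) ≤ d^2/8)]
    have t3 : d^2/8*|A| ≤ d^2/8*(M2/n) := mul_le_mul_of_nonneg_left hA (by positivity)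
    have t4 : M3 * d^3/(8*n) ≤ M3 * d^2/(8*n) := by
      apply div_le_div_of_nonneg_right _ (by positivity)
      · have hd32 : d^3 ≤ d^2 := by nlinarith
        exact mul_le_mul_of_nonneg_left hd32 hM3
    have t5 : M3*d^2/(8*n) + d^2/8*(M2/n) = d^2*(M2+M3)/(8*n) := by field_simp; ring
    linarith
  -- E1
  have hE1 : |(sb - sa)^2 - (b-a)^2/(4*a)| ≤ (M2+M3)^3*d^5/(m^2*n) := by
    have heq : (sb - sa)^2 - (b-a)^2/(4*a) = (b-a)^2*(4*a-(sa+sb)^2)/(4*a*(sa+sb)^2) := by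
      rw [hT]; field_simp
    have h4aS : |4*a - (sa+sb)^2| ≤ 3*|b - a| := by
      have e1 : 4*a - (sa+sb)^2 = (3*sa+sb)*(sa-sb) := by rw [← hsa2]; ring
      rw [e1, abs_mul, abs_of_pos (by linarith : (0:ℝ) < 3*sa+sb)]
      have e2 : |sa - sb| = |b-a|/(sa+sb) := by
        rw [abs_sub_comm, hdiff, abs_div, abs_of_pos hS]
      rw [e2]
      rw [mul_div_assoc'] -- (3sa+sb)*|b-a| / (sa+sb)
      rw [div_le_iff₀ hS]
      nlinarith [mul_le_mul_of_nonneg_right (show 3*sa+sb ≤ 3*(sa+sb) by linarith) (abs_nonneg (b-a))]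
    rw [heq, abs_div, abs_mul, abs_of_pos (by positivity : (0:ℝ) < 4*a*(sa+sb)^2),
      abs_of_nonneg (sq_nonneg (b-a))]
    have hnum : (b-a)^2 * |4*a-(sa+sb)^2| ≤ 3*|b-a|^3 := by
      calc (b-a)^2 * |4*a-(sa+sb)^2| ≤ (b-a)^2 * (3*|b-a|) := by
            exact mul_le_mul_of_nonneg_left h4aS (by positivity)
        _ = 3*|b-a|^3 := by rw [← sq_abs]; ring
    have hden : 16*(m/n)^2 ≤ 4*a*(sa+sb)^2 := by nlinarith
    calc (b-a)^2 * |4*a-(sa+sb)^2| / (4*a*(sa+sb)^2)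
        ≤ 3*|b-a|^3 / (16*(m/n)^2) :=
          div_le_div₀ (by positivity) hnum (by positivity) hden
      _ ≤ 3*(d^2*(M2+M3)/(8*n))^3 / (16*(m/n)^2) := by
          apply div_le_div_of_nonneg_right _ (by positivity)
          · have := pow_le_pow_left₀ (abs_nonneg (b-a)) hba 3
            linarith
      _ = 3*d^6*(M2+M3)^3/(8192*m^2*n) := by field_simp; ring
      _ ≤ (M2+M3)^3*d^5/(m^2*n) := by
          rw [div_le_div_iff₀ (by positivity) (by positivity)]
          have hd65 : d^6 ≤ d^5 := by nlinarith [pow_nonneg hd.le 5, pow_pos hd 5]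
          have hX : (0:ℝ) ≤ (M2+M3)^3 := by positivity
          have key := mul_le_mul_of_nonneg_right (mul_le_mul_of_nonneg_left hd65 hX)
            (by positivity : (0:ℝ) ≤ m^2*n)
          nlinarith [mul_nonneg (mul_nonneg hX (pow_nonneg hd.le 5)) (by positivity : (0:ℝ) ≤ m^2*n)]
  -- E2
  have hE2 : |(b-a)^2/(4*a) - d^4*A^2/(256*a)| ≤ M3*(M2+M3)*d^5/(m*n) := by
    have heq : (b-a)^2/(4*a) - d^4*A^2/(256*a) = ((b-a) - d^2*A/8)*((b-a) + d^2*A/8)/(4*a) := by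
      field_simp; ring
    rw [heq, abs_div, abs_mul, abs_of_pos (by positivity : (0:ℝ) < 4*a)]
    have f1 : |(b-a) - d^2*A/8| ≤ M3*d^3/(8*n) := by
      have : (b-a) - d^2*A/8 = b - a - d^2/8*A := by ring
      rw [this]; exact hr
    have f2 : |(b-a) + d^2*A/8| ≤ d^2*(M2+M3)/(4*n) := by
      calc |(b-a) + d^2*A/8| ≤ |b-a| + |d^2*A/8| := abs_add_le _ _
        _ ≤ d^2*(M2+M3)/(8*n) + d^2/8*(M2/n) := by
            have : |d^2*A/8| = d^2/8*|A| := by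
              rw [abs_div, abs_mul, abs_of_nonneg (by positivity : (0:ℝ) ≤ d^2),
                abs_of_nonneg (by norm_num : (0:ℝ) ≤ (8:ℝ))]
              ring
            rw [this]
            have := mul_le_mul_of_nonneg_left hA (by positivity : (0:ℝ) ≤ d^2/8)
            linarith
        _ ≤ d^2*(M2+M3)/(4*n) := by
            have comb : d^2*(M2+M3)/(8*n) + d^2/8*(M2/n) = (d^2*(M2+M3) + d^2*M2)/(8*n) := by
              field_simp
            rw [comb, div_le_div_iff₀ (by positivity) (by positivity)]
            nlinarith [mul_nonneg (mul_nonneg hn0.le (pow_nonneg hd.le 2)) hM3]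
    have hmul : |(b-a) - d^2*A/8| * |(b-a) + d^2*A/8| ≤ (M3*d^3/(8*n)) * (d^2*(M2+M3)/(4*n)) :=
      mul_le_mul f1 f2 (abs_nonneg _) (by positivity)
    calc |(b-a) - d^2*A/8| * |(b-a) + d^2*A/8| / (4*a)
        ≤ (M3*d^3/(8*n)) * (d^2*(M2+M3)/(4*n)) / (4*(m/n)) :=
          div_le_div₀ (by positivity) hmul (by positivity) (by linarith)
      _ = M3*(M2+M3)*d^5/(128*m*n) := by field_simp; ring
      _ ≤ M3*(M2+M3)*d^5/(m*n) := by
          apply div_le_div_of_nonneg_left (by positivity) (by positivity)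
          nlinarith
  calc |(sb - sa)^2 - d^4*A^2/(256*a)|
      ≤ |(sb - sa)^2 - (b-a)^2/(4*a)| + |(b-a)^2/(4*a) - d^4*A^2/(256*a)| := abs_sub_le _ _ _
    _ ≤ (M2+M3)^3*d^5/(m^2*n) + M3*(M2+M3)*d^5/(m*n) := add_le_add hE1 hE2
    _ = ((M2+M3)^3/m^2 + M3*(M2+M3)/m) * d^5 / n := by field_simp

lemma binApprox (m M0 M2 e n a A u v : ℝ) (hm : 0 < m) (hn : 1 ≤ n) (he : 0 ≤ e)
    (ha : m/n ≤ a) (hv : m ≤ v) (hvM : v ≤ M0) (hA : |A| ≤ M2/n) (hu : |u| ≤ M2)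
    (hAu : |A - u/n| ≤ e/n) (hav : |a - v/n| ≤ e/n) :
    |A^2/a - u^2/(v*n)| ≤ (2*M0*M2*e + M2^2*e)/(m^2*n) := by
  have hn0 : (0:ℝ) < n := lt_of_lt_of_le one_pos hn
  have hn0' : n ≠ 0 := ne_of_gt hn0
  have ha0 : 0 < a := lt_of_lt_of_le (div_pos hm hn0) ha
  have hv0 : 0 < v := lt_of_lt_of_le hm hv
  have hM2 : 0 ≤ M2 := le_trans (abs_nonneg u) hu
  have hM0 : 0 ≤ M0 := le_trans hv0.le hvM
  have heq : A^2/a - u^2/(v*n) = (A^2*v*n - u^2*a)/(a*v*n) := by field_simp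
  rw [heq, abs_div, abs_of_pos (by positivity : (0:ℝ) < a*v*n)]
  have hnum : |A^2*v*n - u^2*a| ≤ (2*M0*M2*e + M2^2*e)/n := by
    have expand : A^2*v*n - u^2*a = v*n*((A - u/n)*(A + u/n)) + u^2*(v/n - a) := by
      field_simp; ring
    rw [expand]
    have t1 : |v*n*((A - u/n)*(A + u/n))| ≤ (M0*n)*((e/n)*(2*M2/n)) := by
      rw [abs_mul, abs_mul, abs_mul, abs_of_pos hv0, abs_of_pos hn0]
      have h1 : |A + u/n| ≤ 2*M2/n := by
        have : |u/n| ≤ M2/n := by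
          rw [abs_div, abs_of_pos hn0]
          gcongr
        calc |A + u/n| ≤ |A| + |u/n| := abs_add_le _ _
          _ ≤ M2/n + M2/n := add_le_add hA this
          _ = 2*M2/n := by ring
      have h2 : |A - u/n| * |A + u/n| ≤ (e/n)*(2*M2/n) :=
        mul_le_mul hAu h1 (abs_nonneg _) (by positivity)
      have h3 : v*n ≤ M0*n := mul_le_mul_of_nonneg_right hvM hn0.le
      exact mul_le_mul h3 h2 (by positivity) (by positivity)
    have t2 : |u^2*(v/n - a)| ≤ M2^2*(e/n) := by
      rw [abs_mul]
      have hu2 : |u^2| = |u|^2 := by rw [abs_pow]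
      have : |u^2| ≤ M2^2 := by
        rw [hu2]; exact pow_le_pow_left₀ (abs_nonneg u) hu 2
      have hva : |v/n - a| ≤ e/n := by rw [abs_sub_comm]; exact hav
      exact mul_le_mul this hva (abs_nonneg _) (by positivity)
    calc |v*n*((A - u/n)*(A + u/n)) + u^2*(v/n - a)|
        ≤ |v*n*((A - u/n)*(A + u/n))| + |u^2*(v/n - a)| := abs_add_le _ _
      _ ≤ (M0*n)*((e/n)*(2*M2/n)) + M2^2*(e/n) := add_le_add t1 t2
      _ = (2*M0*M2*e + M2^2*e)/n := by field_simp
  have hden : m^2 ≤ a*v*n := by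
    have : (m/n)*m*n ≤ a*v*n :=
      mul_le_mul_of_nonneg_right (mul_le_mul ha hv hm.le ha0.le) hn0.le
    calc m^2 = (m/n)*m*n := by field_simp
      _ ≤ a*v*n := this
  calc |A^2*v*n - u^2*a|/(a*v*n) ≤ ((2*M0*M2*e + M2^2*e)/n)/(m^2) :=
        div_le_div₀ (by positivity) hnum (by positivity) hden
    _ = (2*M0*M2*e + M2^2*e)/(m^2*n) := by rw [div_div, mul_comm n (m^2)]
-- generic helpers about bins
lemma bin_bounds (n i : ℕ) (hn : 0 < n) :
    ((i:ℝ)/n ≤ ((i:ℝ)+1)/n) ∧ (((i:ℝ)+1)/n - (i:ℝ)/n = 1/n) := by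
  have hn0 : (0:ℝ) < n := Nat.cast_pos.mpr hn
  constructor
  · gcongr
    linarith
  · field_simp
    ring

lemma bin_lb (f : ℝ → ℝ) (hf : Continuous f) (n i : ℕ) (hn : 0 < n) (m : ℝ)
    (hm : ∀ x ∈ Icc ((i:ℝ)/n) (((i:ℝ)+1)/n), m ≤ f x) :
    m / n ≤ ∫ x in ((i:ℝ)/n)..(((i:ℝ)+1)/n), f x := by
  have hn0 : (0:ℝ) < n := Nat.cast_pos.mpr hn
  obtain ⟨hle, hlen⟩ := bin_bounds n i hn
  have h1 : ∫ x in ((i:ℝ)/n)..(((i:ℝ)+1)/n), m = m / n := by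
    rw [intervalIntegral.integral_const, smul_eq_mul, hlen]
    field_simp
  rw [← h1]
  exact intervalIntegral.integral_mono_on hle intervalIntegrable_const
    (hf.intervalIntegrable _ _) hm

lemma bin_abs (f : ℝ → ℝ) (n i : ℕ) (hn : 0 < n) (C : ℝ)
    (hC : ∀ x ∈ Icc ((i:ℝ)/n) (((i:ℝ)+1)/n), |f x| ≤ C) :
    |∫ x in ((i:ℝ)/n)..(((i:ℝ)+1)/n), f x| ≤ C / n := by
  have hn0 : (0:ℝ) < n := Nat.cast_pos.mpr hn
  obtain ⟨hle, hlen⟩ := bin_bounds n i hn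
  have hsub : uIoc ((i:ℝ)/n) (((i:ℝ)+1)/n) ⊆ Icc ((i:ℝ)/n) (((i:ℝ)+1)/n) := by
    rw [uIoc_of_le hle]
    exact Ioc_subset_Icc_self
  have := intervalIntegral.norm_integral_le_of_norm_le_const
    (C := C) (f := f) (a := (i:ℝ)/n) (b := ((i:ℝ)+1)/n)
    (fun x hx => by rw [Real.norm_eq_abs]; exact hC x (hsub hx))
  rw [Real.norm_eq_abs] at this
  calc |∫ x in ((i:ℝ)/n)..(((i:ℝ)+1)/n), f x| ≤ C * |((i:ℝ)+1)/n - (i:ℝ)/n| := this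
    _ = C / n := by rw [hlen, abs_of_pos (by positivity)]; ring

lemma bin_subset (n i : ℕ) (hi : i < n) : Icc ((i:ℝ)/n) (((i:ℝ)+1)/n) ⊆ Icc (0:ℝ) 1 := by
  have hn0 : (0:ℝ) < n := Nat.cast_pos.mpr (by omega)
  intro x hx
  obtain ⟨h1, h2⟩ := hx
  have hi1 : ((i:ℝ)+1) ≤ n := by exact_mod_cast Nat.succ_le_of_lt hi
  have hl : (0:ℝ) ≤ (i:ℝ)/n := by positivity
  have hr : ((i:ℝ)+1)/n ≤ 1 := by rw [div_le_one hn0]; exact hi1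
  exact ⟨le_trans hl h1, le_trans h2 hr⟩
end aux

section riemann
open Set

lemma uc_helper (g : ℝ → ℝ) (hg : Continuous g) :
    ∀ e > (0:ℝ), ∃ δ > (0:ℝ), ∀ x ∈ Icc (0:ℝ) 1, ∀ y ∈ Icc (0:ℝ) 1,
      |x - y| ≤ δ → |g x - g y| ≤ e := by
  intro e he
  have := (isCompact_Icc (a := (0:ℝ)) (b := 1)).uniformContinuousOn_of_continuous
    hg.continuousOn
  rw [Metric.uniformContinuousOn_iff_le] at this
  obtain ⟨δ, hδ, H⟩ := this e he
  exact ⟨δ/2, by linarith, fun x hx y hy hxy => by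
    have := H x hx y hy (by rw [Real.dist_eq]; linarith)
    rwa [Real.dist_eq] at this⟩

lemma riemann (h : ℝ → ℝ) (hC4 : ContDiff ℝ 4 h) (hpos : ∀ x, 0 < h x) (x0 : ℝ) :
    ∀ ε > (0:ℝ), ∃ N : ℕ, 1 ≤ N ∧ ∀ n : ℕ, N ≤ n →
      |(∑ i ∈ Finset.range n,
          (∫ x in ((i:ℝ)/n)..(((i:ℝ)+1)/n), deriv (deriv h) (x - x0))^2 / binInt h x0 n i)
        - ∫ x in (0:ℝ)..1, (deriv (deriv h) (x - x0))^2 / h (x - x0)| ≤ ε := by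
  intro ε hε
  have hch : Continuous h := hC4.continuous
  have hc1 : ContDiff ℝ 3 (deriv h) :=
    ((contDiff_succ_iff_deriv (n := 3)).mp (by norm_num1; exact hC4)).2.2
  have hc2 : ContDiff ℝ 2 (deriv (deriv h)) :=
    ((contDiff_succ_iff_deriv (n := 2)).mp (by norm_num1; exact hc1)).2.2
  have hch2 : Continuous (deriv (deriv h)) := hc2.continuous
  set G0 : ℝ → ℝ := fun x => h (x - x0) with hG0def
  set G2 : ℝ → ℝ := fun x => deriv (deriv h) (x - x0) with hG2def
  have hG0c : Continuous G0 := hch.comp (continuous_id.sub continuous_const)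
  have hG2c : Continuous G2 := hch2.comp (continuous_id.sub continuous_const)
  set F : ℝ → ℝ := fun x => (G2 x)^2 / G0 x with hFdef
  have hFc : Continuous F := ((hG2c.pow 2).div hG0c (fun x => ne_of_gt (hpos _)))
  -- min of G0 on [0,1]
  obtain ⟨xm, hxm, hxmin⟩ := (isCompact_Icc (a := (0:ℝ)) (b := 1)).exists_isMinOn
    ⟨0, by norm_num⟩ hG0c.continuousOn
  set m : ℝ := G0 xm with hmdef
  have hm : 0 < m := hpos _
  have hmle : ∀ x ∈ Icc (0:ℝ) 1, m ≤ G0 x := fun x hx => hxmin hx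
  -- bounds
  obtain ⟨M0, hM0⟩ := (isCompact_Icc (a := (0:ℝ)) (b := 1)).exists_bound_of_continuousOn
    hG0c.continuousOn
  obtain ⟨M2, hM2⟩ := (isCompact_Icc (a := (0:ℝ)) (b := 1)).exists_bound_of_continuousOn
    hG2c.continuousOn
  have hM0nn : 0 ≤ M0 := le_trans (norm_nonneg _) (hM0 0 (by norm_num))
  have hM2nn : 0 ≤ M2 := le_trans (norm_nonneg _) (hM2 0 (by norm_num))
  -- epsilons
  set e1 : ℝ := ε * m^2 / (2*(2*M0*M2 + M2^2 + 1)) with he1def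
  have he1 : 0 < e1 := by positivity
  obtain ⟨δ2, hδ2, H2⟩ := uc_helper G2 hG2c e1 he1
  obtain ⟨δ0, hδ0, H0⟩ := uc_helper G0 hG0c e1 he1
  obtain ⟨δF, hδF, HF⟩ := uc_helper F hFc (ε/2) (by linarith)
  set δ : ℝ := min δ2 (min δ0 δF) with hδdef
  have hδ : 0 < δ := lt_min hδ2 (lt_min hδ0 hδF)
  refine ⟨⌈1/δ⌉₊ + 1, by omega, fun n hn => ?_⟩
  have hn1 : 1 ≤ n := by omega
  have hn0 : 0 < n := by omega
  have hnR : (1:ℝ) ≤ (n:ℝ) := by exact_mod_cast hn1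
  have hnR0 : (0:ℝ) < (n:ℝ) := by linarith
  have hdn : 1/(n:ℝ) ≤ δ := by
    rw [div_le_iff₀ hnR0]
    have h1 : (1:ℝ)/δ ≤ ⌈1/δ⌉₊ := Nat.le_ceil _
    have h2 : ((⌈1/δ⌉₊ : ℝ)) ≤ n := by exact_mod_cast le_trans (Nat.le_succ _) hn
    have := le_trans h1 h2
    calc (1:ℝ) = δ * (1/δ) := by field_simp
      _ ≤ δ * n := by exact mul_le_mul_of_nonneg_left (le_trans h1 h2) hδ.le
  -- partition sum of F
  have hpart : ∑ i ∈ Finset.range n, (∫ x in ((i:ℝ)/n)..(((i:ℝ)+1)/n), F x)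
      = ∫ x in (0:ℝ)..1, F x := by
    have := intervalIntegral.sum_integral_adjacent_intervals
      (a := fun k : ℕ => (k:ℝ)/n) (n := n) (f := F) (μ := volume)
      (fun k _ => hFc.intervalIntegrable _ _)
    simp only [Nat.cast_zero, Nat.cast_add, Nat.cast_one, zero_div] at this
    rw [show ((n:ℝ))/(n:ℝ) = 1 by field_simp] at this
    rw [← this]
  -- per-bin bound
  have key : ∀ i ∈ Finset.range n,
      |(∫ x in ((i:ℝ)/n)..(((i:ℝ)+1)/n), G2 x)^2 / binInt h x0 n i
        - ∫ x in ((i:ℝ)/n)..(((i:ℝ)+1)/n), F x|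
      ≤ (2*M0*M2*e1 + M2^2*e1)/(m^2*(n:ℝ)) + (ε/2)/(n:ℝ) := by
    intro i hi
    rw [Finset.mem_range] at hi
    have hsub := bin_subset n i hi
    have hc : ((i:ℝ)/n) ∈ Icc (0:ℝ) 1 := hsub (left_mem_Icc.mpr (bin_bounds n i hn0).1)
    set c : ℝ := (i:ℝ)/n with hcdef
    have hδle2 : δ ≤ δ2 := min_le_left _ _
    have hδle0 : δ ≤ δ0 := le_trans (min_le_right _ _) (min_le_left _ _)
    have hδleF : δ ≤ δF := le_trans (min_le_right _ _) (min_le_right _ _)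
    set u : ℝ := G2 c with hudef
    set v : ℝ := G0 c with hvdef
    set A : ℝ := ∫ x in ((i:ℝ)/n)..(((i:ℝ)+1)/n), G2 x with hAdef
    set a : ℝ := binInt h x0 n i with hadef
    have hbinInt_eq : a = ∫ x in ((i:ℝ)/n)..(((i:ℝ)+1)/n), G0 x := rfl
    -- basic bounds
    have hdist : ∀ x ∈ Icc ((i:ℝ)/n) (((i:ℝ)+1)/n), |x - c| ≤ δ := by
      intro x hx
      obtain ⟨hx1, hx2⟩ := hx
      have : |x - c| ≤ 1/(n:ℝ) := by
        rw [abs_le]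
        constructor
        · have : (0:ℝ) < 1/(n:ℝ) := by positivity
          simp only [hcdef]; nlinarith
        · have := (bin_bounds n i hn0).2
          simp only [hcdef]; nlinarith
      exact le_trans this hdn
    have haLB : m/(n:ℝ) ≤ a := by
      rw [hbinInt_eq]
      exact bin_lb G0 hG0c n i hn0 m (fun x hx => hmle x (hsub hx))
    have hALB : |A| ≤ M2/(n:ℝ) := by
      rw [hAdef]
      exact bin_abs G2 n i hn0 M2 (fun x hx => by
        have := hM2 x (hsub hx); rwa [Real.norm_eq_abs] at this)
    have huB : |u| ≤ M2 := by
      have := hM2 c hc; rwa [Real.norm_eq_abs] at this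
    have hvm : m ≤ v := hmle c hc
    have hvM : v ≤ M0 := by
      have := hM0 c hc; rw [Real.norm_eq_abs] at this
      exact le_trans (le_abs_self _) this
    -- |A - u/n|
    have hAu : |A - u/(n:ℝ)| ≤ e1/(n:ℝ) := by
      have heq : A - u/(n:ℝ) = ∫ x in ((i:ℝ)/n)..(((i:ℝ)+1)/n), (G2 x - u) := by
        rw [intervalIntegral.integral_sub (hG2c.intervalIntegrable _ _)
          intervalIntegrable_const, intervalIntegral.integral_const, smul_eq_mul,
          (bin_bounds n i hn0).2, hAdef]
        ring
      rw [heq]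
      exact bin_abs _ n i hn0 e1 (fun x hx =>
        H2 x (hsub hx) c hc (le_trans (hdist x hx) hδle2))
    have hav : |a - v/(n:ℝ)| ≤ e1/(n:ℝ) := by
      have heq : a - v/(n:ℝ) = ∫ x in ((i:ℝ)/n)..(((i:ℝ)+1)/n), (G0 x - v) := by
        rw [intervalIntegral.integral_sub (hG0c.intervalIntegrable _ _)
          intervalIntegrable_const, intervalIntegral.integral_const, smul_eq_mul,
          (bin_bounds n i hn0).2, hbinInt_eq]
        ring
      rw [heq]
      exact bin_abs _ n i hn0 e1 (fun x hx =>
        H0 x (hsub hx) c hc (le_trans (hdist x hx) hδle0))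
    -- second piece
    have hS2 : |u^2/(v*(n:ℝ)) - ∫ x in ((i:ℝ)/n)..(((i:ℝ)+1)/n), F x| ≤ (ε/2)/(n:ℝ) := by
      have hFc' : F c = u^2/v := rfl
      have heq : u^2/(v*(n:ℝ)) - (∫ x in ((i:ℝ)/n)..(((i:ℝ)+1)/n), F x)
          = -∫ x in ((i:ℝ)/n)..(((i:ℝ)+1)/n), (F x - F c) := by
        rw [intervalIntegral.integral_sub (hFc.intervalIntegrable _ _)
          intervalIntegrable_const, intervalIntegral.integral_const, smul_eq_mul,
          (bin_bounds n i hn0).2, hFc']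
        field_simp
        ring
      rw [heq, abs_neg]
      exact bin_abs _ n i hn0 (ε/2) (fun x hx =>
        HF x (hsub hx) c hc (le_trans (hdist x hx) hδleF))
    have hS1 : |A^2/a - u^2/(v*(n:ℝ))| ≤ (2*M0*M2*e1 + M2^2*e1)/(m^2*(n:ℝ)) :=
      binApprox m M0 M2 e1 (n:ℝ) a A u v hm hnR he1.le haLB hvm hvM hALB huB hAu hav
    calc |A^2/a - ∫ x in ((i:ℝ)/n)..(((i:ℝ)+1)/n), F x|
        ≤ |A^2/a - u^2/(v*(n:ℝ))|
          + |u^2/(v*(n:ℝ)) - ∫ x in ((i:ℝ)/n)..(((i:ℝ)+1)/n), F x| := abs_sub_le _ _ _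
      _ ≤ _ := add_le_add hS1 hS2
  -- assemble
  rw [← hpart, ← Finset.sum_sub_distrib]
  calc |∑ i ∈ Finset.range n,
        ((∫ x in ((i:ℝ)/n)..(((i:ℝ)+1)/n), G2 x)^2 / binInt h x0 n i
          - ∫ x in ((i:ℝ)/n)..(((i:ℝ)+1)/n), F x)|
      ≤ ∑ i ∈ Finset.range n,
        |(∫ x in ((i:ℝ)/n)..(((i:ℝ)+1)/n), G2 x)^2 / binInt h x0 n i
          - ∫ x in ((i:ℝ)/n)..(((i:ℝ)+1)/n), F x| := Finset.abs_sum_le_sum_abs _ _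
    _ ≤ ∑ i ∈ Finset.range n,
        ((2*M0*M2*e1 + M2^2*e1)/(m^2*(n:ℝ)) + (ε/2)/(n:ℝ)) := Finset.sum_le_sum key
    _ = (n:ℝ) * ((2*M0*M2*e1 + M2^2*e1)/(m^2*(n:ℝ)) + (ε/2)/(n:ℝ)) := by
        rw [Finset.sum_const, Finset.card_range, nsmul_eq_mul]
    _ ≤ ε := by
        have expand : (n:ℝ) * ((2*M0*M2*e1 + M2^2*e1)/(m^2*(n:ℝ)) + (ε/2)/(n:ℝ))
            = (2*M0*M2*e1 + M2^2*e1)/m^2 + ε/2 := by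
          field_simp
        rw [expand, he1def]
        have hB : (2*M0*M2 + M2^2) * (ε * m^2 / (2*(2*M0*M2 + M2^2 + 1))) / m^2 ≤ ε/2 := by
          have hm0 : m ≠ 0 := ne_of_gt hm
          have h2 : (0:ℝ) < 2*(2*M0*M2 + M2^2 + 1) := by positivity
          have key : (2*M0*M2 + M2^2) * (ε * m^2 / (2*(2*M0*M2 + M2^2 + 1))) / m^2
              = ε * ((2*M0*M2 + M2^2) / (2*(2*M0*M2 + M2^2 + 1))) := by
            field_simp
          rw [key]
          have hfrac : (2*M0*M2 + M2^2) / (2*(2*M0*M2 + M2^2 + 1)) ≤ 1/2 := by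
            rw [div_le_div_iff₀ h2 (by norm_num)]
            nlinarith [mul_nonneg hM0nn hM2nn, sq_nonneg M2]
          calc ε * ((2*M0*M2 + M2^2) / (2*(2*M0*M2 + M2^2 + 1))) ≤ ε * (1/2) :=
                mul_le_mul_of_nonneg_left hfrac hε.le
            _ = ε/2 := by ring
        have heq2 : (2*M0*M2*(ε * m^2 / (2*(2*M0*M2 + M2^2 + 1)))
            + M2^2*(ε * m^2 / (2*(2*M0*M2 + M2^2 + 1))))/m^2
            = (2*M0*M2 + M2^2) * (ε * m^2 / (2*(2*M0*M2 + M2^2 + 1))) / m^2 := by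
          ring
        rw [heq2]
        linarith
end riemann

theorem stmt7 (h : ℝ → ℝ) (hC4 : ContDiff ℝ 4 h) (hpos : ∀ x, 0 < h x)
    (x0 : ℝ) (hx0 : x0 ∈ Set.Ioo (0 : ℝ) 1) :
    ∀ ε > (0 : ℝ), ∃ N : ℕ, ∃ δ > (0 : ℝ), ∀ n : ℕ, N ≤ n → ∀ d : ℝ, 0 < d → d < δ →
      |(1 / d ^ 4) * ∑ i ∈ Finset.range n,
          (Real.sqrt ((1 / 2) * binInt h (x0 - d / 2) n i
              + (1 / 2) * binInt h (x0 + d / 2) n i)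
            - Real.sqrt (binInt h x0 n i)) ^ 2
        - (1 / 256) * ∫ x in (0 : ℝ)..1,
            (deriv (deriv h) (x - x0)) ^ 2 / h (x - x0)| ≤ ε := by
  intro ε hε
  obtain ⟨hx0a, hx0b⟩ := hx0
  have hch : Continuous h := hC4.continuous
  have hc1 : ContDiff ℝ 3 (deriv h) :=
    ((contDiff_succ_iff_deriv (n := 3)).mp (by norm_num1; exact hC4)).2.2
  have hc2 : ContDiff ℝ 2 (deriv (deriv h)) :=
    ((contDiff_succ_iff_deriv (n := 2)).mp (by norm_num1; exact hc1)).2.2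
  have hc3 : ContDiff ℝ 1 (deriv (deriv (deriv h))) :=
    ((contDiff_succ_iff_deriv (n := 1)).mp (by norm_num1; exact hc2)).2.2
  have hch2 : Continuous (deriv (deriv h)) := hc2.continuous
  have hch3 : Continuous (deriv (deriv (deriv h))) := hc3.continuous
  -- constants on [-2,2]
  obtain ⟨xm, hxm, hxmin⟩ := (isCompact_Icc (a := (-2:ℝ)) (b := 2)).exists_isMinOn
    ⟨0, by norm_num⟩ hch.continuousOn
  set m : ℝ := h xm with hmdef
  have hm : 0 < m := hpos _
  have hmle : ∀ x ∈ Set.Icc (-2:ℝ) 2, m ≤ h x := fun x hx => hxmin hx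
  obtain ⟨M2, hM2⟩ := (isCompact_Icc (a := (-2:ℝ)) (b := 2)).exists_bound_of_continuousOn
    hch2.continuousOn
  obtain ⟨M3, hM3⟩ := (isCompact_Icc (a := (-2:ℝ)) (b := 2)).exists_bound_of_continuousOn
    hch3.continuousOn
  have hM2' : ∀ x ∈ Set.Icc (-2:ℝ) 2, |deriv (deriv h) x| ≤ M2 := fun x hx => by
    have := hM2 x hx; rwa [Real.norm_eq_abs] at this
  have hM3' : ∀ x ∈ Set.Icc (-2:ℝ) 2, |deriv (deriv (deriv h)) x| ≤ M3 := fun x hx => by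
    have := hM3 x hx; rwa [Real.norm_eq_abs] at this
  have hM2nn : 0 ≤ M2 := le_trans (abs_nonneg _) (hM2' 0 (by norm_num))
  have hM3nn : 0 ≤ M3 := le_trans (abs_nonneg _) (hM3' 0 (by norm_num))
  set C : ℝ := (M2+M3)^3/m^2 + M3*(M2+M3)/m with hCdef
  have hCnn : 0 ≤ C := by positivity
  -- Riemann part
  obtain ⟨N, hN1, hNprop⟩ := riemann h hC4 hpos x0 (128*ε) (by linarith)
  refine ⟨N, min 1 (ε/(2*(C+1))), lt_min one_pos (by positivity), fun n hn d hd hdδ => ?_⟩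
  have hd1 : d < 1 := lt_of_lt_of_le hdδ (min_le_left _ _)
  have hdε : d ≤ ε/(2*(C+1)) := le_of_lt (lt_of_lt_of_le hdδ (min_le_right _ _))
  have hn1 : 1 ≤ n := le_trans hN1 hn
  have hn0 : 0 < n := hn1
  have hnR : (1:ℝ) ≤ (n:ℝ) := by exact_mod_cast hn1
  have hnR0 : (0:ℝ) < (n:ℝ) := by linarith
  -- shorthand
  set A : ℕ → ℝ := fun i => ∫ x in ((i:ℝ)/n)..(((i:ℝ)+1)/n), deriv (deriv h) (x - x0)
    with hAdef
  set a : ℕ → ℝ := fun i => binInt h x0 n i with hadef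
  set b : ℕ → ℝ := fun i => (1/2) * binInt h (x0 - d/2) n i
    + (1/2) * binInt h (x0 + d/2) n i with hbdef
  -- per-bin estimates
  have perbin_all : ∀ i ∈ Finset.range n,
      |(Real.sqrt (b i) - Real.sqrt (a i))^2 - d^4 * (A i)^2/(256 * a i)|
        ≤ C * d^5 / (n:ℝ) := by
    intro i hi
    rw [Finset.mem_range] at hi
    have hsub := bin_subset n i hi
    have hx01 : ∀ x ∈ Set.Icc ((i:ℝ)/n) (((i:ℝ)+1)/n), x - x0 ∈ Set.Icc (-2:ℝ) 2 := by
      intro x hx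
      have := hsub hx
      obtain ⟨hx1, hx2⟩ := this
      constructor <;> nlinarith
    have hup : ∀ x ∈ Set.Icc ((i:ℝ)/n) (((i:ℝ)+1)/n), x - (x0 + d/2) ∈ Set.Icc (-2:ℝ) 2 := by
      intro x hx
      obtain ⟨hx1, hx2⟩ := hsub hx
      constructor <;> nlinarith
    have hdown : ∀ x ∈ Set.Icc ((i:ℝ)/n) (((i:ℝ)+1)/n), x - (x0 - d/2) ∈ Set.Icc (-2:ℝ) 2 := by
      intro x hx
      obtain ⟨hx1, hx2⟩ := hsub hx
      constructor <;> nlinarith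
    -- a bounds
    have ha1 : m/(n:ℝ) ≤ a i :=
      bin_lb _ (hch.comp (continuous_id.sub continuous_const)) n i hn0 m
        (fun x hx => hmle _ (hx01 x hx))
    have hb1 : m/(n:ℝ) ≤ b i := by
      have g1 : m/(n:ℝ) ≤ binInt h (x0 - d/2) n i :=
        bin_lb _ (hch.comp (continuous_id.sub continuous_const)) n i hn0 m
          (fun x hx => hmle _ (hdown x hx))
      have g2 : m/(n:ℝ) ≤ binInt h (x0 + d/2) n i :=
        bin_lb _ (hch.comp (continuous_id.sub continuous_const)) n i hn0 m
          (fun x hx => hmle _ (hup x hx))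
      rw [hbdef]
      dsimp only
      linarith
    have hA : |A i| ≤ M2/(n:ℝ) :=
      bin_abs _ n i hn0 M2 (fun x hx => hM2' _ (hx01 x hx))
    -- Taylor remainder
    have hr : |b i - a i - d^2/8 * A i| ≤ M3 * d^3/(8*(n:ℝ)) := by
      set G : ℝ → ℝ := fun x => (h ((x - x0) + d/2) + h ((x - x0) - d/2))/2
        - h (x - x0) - (d/2)^2/2 * deriv (deriv h) (x - x0) with hGdef
      have hint1 : binInt h (x0 - d/2) n i
          = ∫ x in ((i:ℝ)/n)..(((i:ℝ)+1)/n), h ((x - x0) + d/2) := by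
        unfold binInt
        congr 1
        funext x
        congr 1
        ring
      have hint2 : binInt h (x0 + d/2) n i
          = ∫ x in ((i:ℝ)/n)..(((i:ℝ)+1)/n), h ((x - x0) - d/2) := by
        unfold binInt
        congr 1
        funext x
        congr 1
        ring
      have hcont1 : Continuous (fun x : ℝ => h ((x - x0) + d/2)) := by
        apply hch.comp
        continuity
      have hcont2 : Continuous (fun x : ℝ => h ((x - x0) - d/2)) := by
        apply hch.comp
        continuity
      have hcont0 : Continuous (fun x : ℝ => h (x - x0)) :=
        hch.comp (continuous_id.sub continuous_const)
      have hcont2d : Continuous (fun x : ℝ => (d/2)^2/2 * deriv (deriv h) (x - x0)) := by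
        apply continuous_const.mul
        exact hch2.comp (continuous_id.sub continuous_const)
      have heq : b i - a i - d^2/8 * A i = ∫ x in ((i:ℝ)/n)..(((i:ℝ)+1)/n), G x := by
        rw [hGdef]
        have e1 : (∫ x in ((i:ℝ)/n)..(((i:ℝ)+1)/n), ((h ((x - x0) + d/2) + h ((x - x0) - d/2))/2
            - h (x - x0) - (d/2)^2/2 * deriv (deriv h) (x - x0)))
            = ((∫ x in ((i:ℝ)/n)..(((i:ℝ)+1)/n), h ((x - x0) + d/2))
              + (∫ x in ((i:ℝ)/n)..(((i:ℝ)+1)/n), h ((x - x0) - d/2)))/2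
              - (∫ x in ((i:ℝ)/n)..(((i:ℝ)+1)/n), h (x - x0))
              - (d/2)^2/2 * ∫ x in ((i:ℝ)/n)..(((i:ℝ)+1)/n), deriv (deriv h) (x - x0) := by
          rw [intervalIntegral.integral_sub, intervalIntegral.integral_sub,
            intervalIntegral.integral_div, intervalIntegral.integral_add,
            intervalIntegral.integral_const_mul]
          · exact hcont1.intervalIntegrable _ _
          · exact hcont2.intervalIntegrable _ _
          · exact ((hcont1.add hcont2).div_const 2).intervalIntegrable _ _
          · exact hcont0.intervalIntegrable _ _
          · exact (((hcont1.add hcont2).div_const 2).sub hcont0).intervalIntegrable _ _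
          · exact hcont2d.intervalIntegrable _ _
        rw [e1, ← hint1, ← hint2, hbdef, hadef, hAdef]
        dsimp only
        unfold binInt
        ring
      rw [heq]
      have hGbound : ∀ x ∈ Set.Icc ((i:ℝ)/n) (((i:ℝ)+1)/n), |G x| ≤ M3 * d^3/8 := by
        intro x hx
        have hu : x - x0 ∈ Set.Icc (-(3/2):ℝ) (3/2) := by
          obtain ⟨hx1, hx2⟩ := hsub hx
          constructor <;> nlinarith
        have hs : d/2 ∈ Set.Icc (0:ℝ) (1/2) := ⟨by linarith, by linarith⟩
        have := taylor_sym h hC4 M3 hM3' (x - x0) hu (d/2) hs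
        rw [hGdef]
        dsimp only
        calc |(h ((x - x0) + d/2) + h ((x - x0) - d/2))/2 - h (x - x0)
              - (d/2)^2/2 * deriv (deriv h) (x - x0)|
            ≤ M3 * (d/2)^3 := this
          _ = M3 * d^3/8 := by ring
      calc |∫ x in ((i:ℝ)/n)..(((i:ℝ)+1)/n), G x| ≤ (M3 * d^3/8)/(n:ℝ) :=
          bin_abs G n i hn0 _ hGbound
        _ = M3 * d^3/(8*(n:ℝ)) := by rw [div_div]
    exact perbin m M2 M3 (n:ℝ) (a i) (b i) (A i) d hm hnR hd hd1.le ha1 hb1 hA hr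
  -- sum the per-bin estimates
  set S : ℝ := ∑ i ∈ Finset.range n, (Real.sqrt (b i) - Real.sqrt (a i))^2 with hSdef
  set R : ℝ := ∑ i ∈ Finset.range n, (A i)^2 / (a i) with hRdef
  have hd4 : (0:ℝ) < d^4 := by positivity
  have sumbound : |S - (d^4/256) * R| ≤ C * d^5 := by
    have e2 : (d^4/256) * R = ∑ i ∈ Finset.range n, d^4 * (A i)^2/(256 * a i) := by
      rw [hRdef, Finset.mul_sum]
      apply Finset.sum_congr rfl
      intro i _
      ring
    rw [e2, ← Finset.sum_sub_distrib]
    calc |∑ i ∈ Finset.range n,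
          ((Real.sqrt (b i) - Real.sqrt (a i))^2 - d^4 * (A i)^2/(256 * a i))|
        ≤ ∑ i ∈ Finset.range n,
          |(Real.sqrt (b i) - Real.sqrt (a i))^2 - d^4 * (A i)^2/(256 * a i)| :=
          Finset.abs_sum_le_sum_abs _ _
      _ ≤ ∑ _i ∈ Finset.range n, C * d^5/(n:ℝ) := Finset.sum_le_sum perbin_all
      _ = (n:ℝ) * (C * d^5/(n:ℝ)) := by rw [Finset.sum_const, Finset.card_range, nsmul_eq_mul]
      _ = C * d^5 := by field_simp
  have hriem : |R - ∫ x in (0:ℝ)..1, (deriv (deriv h) (x - x0))^2 / h (x - x0)| ≤ 128*ε :=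
    hNprop n hn
  -- assemble
  set I : ℝ := ∫ x in (0:ℝ)..1, (deriv (deriv h) (x - x0))^2 / h (x - x0) with hIdef
  have split : (1/d^4) * S - (1/256) * I
      = (1/d^4) * (S - (d^4/256) * R) + (1/256) * (R - I) := by
    field_simp
    ring
  have t1 : |(1/d^4) * (S - (d^4/256) * R)| ≤ C * d := by
    rw [abs_mul, abs_of_pos (by positivity : (0:ℝ) < 1/d^4)]
    calc (1/d^4) * |S - (d^4/256) * R| ≤ (1/d^4) * (C * d^5) :=
        mul_le_mul_of_nonneg_left sumbound (by positivity)
      _ = C * d := by field_simp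
  have t2 : |(1/256) * (R - I)| ≤ ε/2 := by
    rw [abs_mul, abs_of_pos (by norm_num : (0:ℝ) < 1/256)]
    calc (1/256) * |R - I| ≤ (1/256) * (128*ε) :=
        mul_le_mul_of_nonneg_left hriem (by norm_num)
      _ = ε/2 := by ring
  have hCd : C * d ≤ ε/2 := by
    have : C * d ≤ (C+1) * d := by nlinarith
    have h2 : (C+1) * d ≤ (C+1) * (ε/(2*(C+1))) := mul_le_mul_of_nonneg_left hdε (by positivity)
    have h3 : (C+1) * (ε/(2*(C+1))) = ε/2 := by field_simp
    linarith
  calc |(1/d^4) * S - (1/256) * I|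
      ≤ |(1/d^4) * (S - (d^4/256) * R)| + |(1/256) * (R - I)| := by
        rw [split]; exact abs_add_le _ _
    _ ≤ C * d + ε/2 := add_le_add t1 t2
    _ ≤ ε := by linarith
end

section
/- Let σ > 0 and let h_σ(x) := (2πσ²)^{−1/2}·exp(−x²/(2σ²)) be the Gaussian kernel. Then ∫_0^1 h_σ''(x − 1/2)² dx = ( 6√π·σ³·erf(1/(2σ)) + e^{−1/(4σ²)}·(2σ² − 1) ) / (16π·σ⁸), where erf(x) := (2/√π)·∫_0^x e^{−t²} dt. Moreover, as σ → 0, ∫_0^1 h_σ''(x − 1/2)² dx = (3/8)·π^{−1/2}·σ^{−5} + o(σ^{−5}), i.e. σ⁵·∫_0^1 h_σ''(x − 1/2)² dx → (3/8)·π^{−1/2}. -/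
open MeasureTheory Filter Real

/-- The Gaussian kernel with standard deviation `σ`. -/
noncomputable def gaussKernel (σ : ℝ) : ℝ → ℝ := fun x =>
  (1 / Real.sqrt (2 * π * σ ^ 2)) * Real.exp (-(x ^ 2) / (2 * σ ^ 2))

/-- The Gauss error function `erf x = (2/√π) ∫_0^x e^{-t²} dt`. -/
noncomputable def erf (x : ℝ) : ℝ :=
  (2 / Real.sqrt π) * ∫ t in (0 : ℝ)..x, Real.exp (-(t ^ 2))

lemma erf_hasDerivAt (x : ℝ) :
    HasDerivAt erf (2 / Real.sqrt π * Real.exp (-(x ^ 2))) x := by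
  have hc : Continuous fun t : ℝ => Real.exp (-(t ^ 2)) := by continuity
  exact ((hc.integral_hasStrictDerivAt 0 x).hasDerivAt).const_mul _

noncomputable def Fg (σ : ℝ) (x : ℝ) : ℝ :=
  3 * Real.sqrt π / (16 * π * σ ^ 5) * erf (x / σ)
    + Real.exp (-(x ^ 2) / σ ^ 2) * (-(x ^ 3) / (4 * π * σ ^ 8) + x / (8 * π * σ ^ 6))

lemma Fg_hasDerivAt (σ : ℝ) (hσ : 0 < σ) (x : ℝ) :
    HasDerivAt (Fg σ) (((x ^ 2 / σ ^ 4 - 1 / σ ^ 2) * gaussKernel σ x) ^ 2) x := by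
  have h1 : HasDerivAt (fun y : ℝ => erf (y / σ))
      (2 / Real.sqrt π * Real.exp (-((x / σ) ^ 2)) * (1 / σ)) x := by
    have := (erf_hasDerivAt (x / σ)).comp x ((hasDerivAt_id x).div_const σ)
    exact this
  have h2 : HasDerivAt (fun y : ℝ => -(y ^ 2) / σ ^ 2) (-(2 * x ^ 1) / σ ^ 2) x :=
    ((hasDerivAt_pow 2 x).neg).div_const _
  have h3 : HasDerivAt (fun y : ℝ => -(y ^ 3) / (4 * π * σ ^ 8) + y / (8 * π * σ ^ 6))
      (-(3 * x ^ 2) / (4 * π * σ ^ 8) + 1 / (8 * π * σ ^ 6)) x := by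
    exact (((hasDerivAt_pow 3 x).neg).div_const _).add ((hasDerivAt_id x).div_const _)
  have h := (h1.const_mul (3 * Real.sqrt π / (16 * π * σ ^ 5))).add ((h2.exp).mul h3)
  refine h.congr_deriv ?_
  have hσ0 : σ ≠ 0 := ne_of_gt hσ
  have hπ : (0:ℝ) < π := pi_pos
  have hsπ : Real.sqrt π ≠ 0 := by positivity
  have he1 : Real.exp (-((x / σ) ^ 2)) = Real.exp (-(x ^ 2) / σ ^ 2) := by
    congr 1; field_simp
  have he2 : gaussKernel σ x ^ 2 = (1 / (2 * π * σ ^ 2)) * Real.exp (-(x ^ 2) / σ ^ 2) := by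
    unfold gaussKernel
    rw [mul_pow, div_pow, one_pow, Real.sq_sqrt (by positivity),
      pow_two (Real.exp _), ← Real.exp_add]
    congr 1
    field_simp; ring
  rw [he1, mul_pow, he2]
  field_simp
  ring

lemma gauss_hasDerivAt (σ : ℝ) (hσ : 0 < σ) (x : ℝ) :
    HasDerivAt (gaussKernel σ) (-x / σ ^ 2 * gaussKernel σ x) x := by
  have h1 : HasDerivAt (fun x : ℝ => -(x ^ 2) / (2 * σ ^ 2))
      (-(2 * x ^ 1) / (2 * σ ^ 2)) x := ((hasDerivAt_pow 2 x).neg).div_const _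
  have := ((h1.exp).const_mul (1 / Real.sqrt (2 * π * σ ^ 2)))
  refine this.congr_deriv ?_
  unfold gaussKernel
  have hσ2 : σ ^ 2 ≠ 0 := by positivity
  field_simp

lemma gauss_deriv2 (σ : ℝ) (hσ : 0 < σ) :
    deriv (deriv (gaussKernel σ)) =
      fun x => (x ^ 2 / σ ^ 4 - 1 / σ ^ 2) * gaussKernel σ x := by
  have hd1 : deriv (gaussKernel σ) = fun x => -x / σ ^ 2 * gaussKernel σ x := by
    funext x; exact (gauss_hasDerivAt σ hσ x).deriv
  rw [hd1]
  funext x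
  have h2 : HasDerivAt (fun x : ℝ => -x / σ ^ 2 * gaussKernel σ x)
      ((-1 / σ ^ 2) * gaussKernel σ x + (-x / σ ^ 2) * (-x / σ ^ 2 * gaussKernel σ x)) x :=
    ((hasDerivAt_id x).neg.div_const _).mul (gauss_hasDerivAt σ hσ x)
  rw [h2.deriv]
  have hσ2 : σ ^ 2 ≠ 0 := by positivity
  field_simp
  ring

lemma erf_neg (x : ℝ) : erf (-x) = - erf x := by
  unfold erf
  have : (∫ t in (0:ℝ)..(-x), Real.exp (-(t ^ 2)))
      = - ∫ t in (0:ℝ)..x, Real.exp (-(t ^ 2)) := by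
    rw [intervalIntegral.integral_symm]
    congr 1
    have := intervalIntegral.integral_comp_neg (a := 0) (b := x) (fun t => Real.exp (-(t ^ 2)))
    simpa using this.symm
  rw [this]; ring

lemma part1 (σ : ℝ) (hσ : 0 < σ) :
    (∫ x in (0 : ℝ)..1, (deriv (deriv (gaussKernel σ)) (x - 1 / 2)) ^ 2) =
      (6 * Real.sqrt π * σ ^ 3 * erf (1 / (2 * σ))
          + Real.exp (-1 / (4 * σ ^ 2)) * (2 * σ ^ 2 - 1))
        / (16 * π * σ ^ 8) := by
  rw [gauss_deriv2 σ hσ]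
  have key : ∀ x ∈ Set.uIcc (0:ℝ) 1, HasDerivAt (fun y => Fg σ (y - 1/2))
      ((((x - 1/2) ^ 2 / σ ^ 4 - 1 / σ ^ 2) * gaussKernel σ (x - 1/2)) ^ 2) x := by
    intro x _
    have := (Fg_hasDerivAt σ hσ (x - 1/2)).comp x ((hasDerivAt_id x).sub_const (1/2))
    rw [mul_one] at this; exact this
  have hcont : Continuous fun x : ℝ =>
      (((x - 1/2) ^ 2 / σ ^ 4 - 1 / σ ^ 2) * gaussKernel σ (x - 1/2)) ^ 2 := by
    unfold gaussKernel; continuity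
  rw [intervalIntegral.integral_eq_sub_of_hasDerivAt key (hcont.intervalIntegrable _ _)]
  have e1 : (1:ℝ) - 1/2 = 1/2 := by norm_num
  have e2 : (0:ℝ) - 1/2 = -(1/2) := by norm_num
  rw [e1, e2]
  unfold Fg
  have hσ0 : σ ≠ 0 := ne_of_gt hσ
  have hπ : (0:ℝ) < π := pi_pos
  have harg : (-(1/2) : ℝ) / σ = -(1/2/σ) := by ring
  have harg2 : ((1:ℝ)/2) / σ = 1 / (2 * σ) := by field_simp
  rw [harg, erf_neg, harg2]
  have hexp1 : (-((1:ℝ)/2) ^ 2 / σ ^ 2) = -1 / (4 * σ ^ 2) := by ring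
  have hexp2 : (-(-((1:ℝ)/2)) ^ 2 / σ ^ 2) = -1 / (4 * σ ^ 2) := by ring
  rw [hexp1, hexp2]
  field_simp
  ring

lemma erf_tendsto : Tendsto erf atTop (nhds 1) := by
  have hint : IntegrableOn (fun t : ℝ => Real.exp (-(t ^ 2))) (Set.Ioi 0) := by
    have := (integrable_exp_neg_mul_sq (b := (1:ℝ)) one_pos).integrableOn (s := Set.Ioi 0)
    simpa using this
  have h := MeasureTheory.intervalIntegral_tendsto_integral_Ioi 0 hint tendsto_id
  have hval : (∫ t in Set.Ioi (0:ℝ), Real.exp (-(t ^ 2))) = Real.sqrt π / 2 := by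
    have := integral_gaussian_Ioi 1
    simpa using this
  rw [hval] at h
  have hsπ : Real.sqrt π ≠ 0 := by positivity
  have := h.const_mul (2 / Real.sqrt π)
  have heq : 2 / Real.sqrt π * (Real.sqrt π / 2) = 1 := by field_simp
  rw [heq] at this
  exact this.congr (fun x => by simp [erf, Function.comp])

lemma cube_exp_tendsto : Tendsto (fun y : ℝ => y ^ 3 * Real.exp (-(y ^ 2) / 4)) atTop (nhds 0) := by
  apply tendsto_of_tendsto_of_tendsto_of_le_of_le' tendsto_const_nhds
    (tendsto_pow_mul_exp_neg_atTop_nhds_zero 3)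
  · filter_upwards [eventually_ge_atTop (0:ℝ)] with y hy
    positivity
  · filter_upwards [eventually_ge_atTop (4:ℝ)] with y hy
    have h1 : Real.exp (-(y ^ 2) / 4) ≤ Real.exp (-y) := by
      apply Real.exp_le_exp.mpr
      nlinarith
    have : (0:ℝ) ≤ y ^ 3 := by positivity
    exact mul_le_mul_of_nonneg_left h1 this

lemma part2 : Tendsto (fun σ : ℝ =>
      σ ^ 5 * ∫ x in (0 : ℝ)..1, (deriv (deriv (gaussKernel σ)) (x - 1 / 2)) ^ 2)
    (nhdsWithin 0 (Set.Ioi 0)) (nhds (3 / (8 * Real.sqrt π))) := by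
  have hπ : (0:ℝ) < π := pi_pos
  have hsπ : Real.sqrt π ≠ 0 := by positivity
  set A : ℝ → ℝ := fun σ => 3 * Real.sqrt π / (8 * π) * erf (1 / (2 * σ)) with hA
  set B : ℝ → ℝ := fun σ => Real.exp (-1 / (4 * σ ^ 2)) * (2 * σ ^ 2 - 1) / (16 * π * σ ^ 3)
    with hB
  have heq : ∀ᶠ σ in nhdsWithin (0:ℝ) (Set.Ioi 0),
      A σ + B σ = σ ^ 5 * ∫ x in (0 : ℝ)..1, (deriv (deriv (gaussKernel σ)) (x - 1 / 2)) ^ 2 := by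
    filter_upwards [self_mem_nhdsWithin] with σ hσ
    rw [part1 σ hσ, hA, hB]
    have hσ0 : σ ≠ 0 := ne_of_gt hσ
    field_simp
    ring
  have htA : Tendsto A (nhdsWithin (0:ℝ) (Set.Ioi 0)) (nhds (3 / (8 * Real.sqrt π))) := by
    have harg : Tendsto (fun σ : ℝ => 1 / (2 * σ)) (nhdsWithin (0:ℝ) (Set.Ioi 0)) atTop := by
      have h2 : Tendsto (fun σ : ℝ => σ⁻¹) (nhdsWithin (0:ℝ) (Set.Ioi 0)) atTop :=
        tendsto_inv_nhdsGT_zero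
      have := h2.const_mul_atTop (show (0:ℝ) < 1/2 by norm_num)
      apply this.congr
      intro σ; field_simp
    have := (erf_tendsto.comp harg).const_mul (3 * Real.sqrt π / (8 * π))
    have hval : 3 * Real.sqrt π / (8 * π) * 1 = 3 / (8 * Real.sqrt π) := by
      have hps : Real.sqrt π * Real.sqrt π = π := Real.mul_self_sqrt hπ.le
      field_simp
      nlinarith [hps]
    rw [hval] at this
    exact this.congr (fun σ => by simp [hA, Function.comp])
  have htB : Tendsto B (nhdsWithin (0:ℝ) (Set.Ioi 0)) (nhds 0) := by
    have hC : Tendsto (fun σ : ℝ => σ⁻¹ ^ 3 * Real.exp (-(σ⁻¹ ^ 2) / 4))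
        (nhdsWithin (0:ℝ) (Set.Ioi 0)) (nhds 0) :=
      cube_exp_tendsto.comp tendsto_inv_nhdsGT_zero
    have hD : Tendsto (fun σ : ℝ => (2 * σ ^ 2 - 1) / (16 * π))
        (nhdsWithin (0:ℝ) (Set.Ioi 0)) (nhds ((2 * (0:ℝ) ^ 2 - 1) / (16 * π))) := by
      apply Tendsto.mono_left _ nhdsWithin_le_nhds
      exact Continuous.tendsto (by continuity) 0
    have := hC.mul hD
    rw [zero_mul] at this
    apply this.congr'
    filter_upwards [self_mem_nhdsWithin] with σ hσ
    have hσ0 : σ ≠ 0 := ne_of_gt hσ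
    simp only [hB]
    have he : Real.exp (-(σ⁻¹ ^ 2) / 4) = Real.exp (-1 / (4 * σ ^ 2)) := by
      congr 1; field_simp
    rw [he]
    generalize Real.exp (-1 / (4 * σ ^ 2)) = E
    field_simp
  have := htA.add htB
  rw [add_zero] at this
  exact this.congr' heq

theorem stmt15 :
    (∀ σ : ℝ, 0 < σ →
      (∫ x in (0 : ℝ)..1, (deriv (deriv (gaussKernel σ)) (x - 1 / 2)) ^ 2) =
        (6 * Real.sqrt π * σ ^ 3 * erf (1 / (2 * σ))
            + Real.exp (-1 / (4 * σ ^ 2)) * (2 * σ ^ 2 - 1))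
          / (16 * π * σ ^ 8)) ∧
    Tendsto (fun σ : ℝ =>
        σ ^ 5 * ∫ x in (0 : ℝ)..1, (deriv (deriv (gaussKernel σ)) (x - 1 / 2)) ^ 2)
      (nhdsWithin 0 (Set.Ioi 0)) (nhds (3 / (8 * Real.sqrt π))) := by
  exact ⟨part1, part2⟩
end

section
/- (Finite-discretization homogeneous Gaussian resolution.) Let h: ℝ → ℝ be even, non-constant, nonnegative and twice continuously differentiable, let x0 ∈ (0,1), fix α, β ∈ (0, 1/2), and fix n ∈ ℕ with Σ_{i=1}^{n} ( ∫_{(i−1)/n}^{i/n} h''(x−x0) dx )² > 0. Let Φ be the standard normal CDF and q_γ := Φ⁻¹(γ). Let (t_k) be positive integers with t_k → ∞ and (d_k) positive reals with d_k → 0; set x1 := x0 − d_k/2, x2 := x0 + d_k/2, p0i := ∫_{(i−1)/n}^{i/n} h(x−x0) dx, p1i := (1/2)∫_{(i−1)/n}^{i/n} h(x−x1) dx + (1/2)∫_{(i−1)/n}^{i/n} h(x−x2) dx, and μ_k := (t_k²/2)·Σ_{i=1}^{n} (p1i − p0i)². If μ_k = (q_{1−β} − q_α)²/2 for every k, then d_k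 · t_k^{1/2} → 2√2 · √(q_{1−β} − q_α) · ( Σ_{i=1}^{n} ( ∫_{(i−1)/n}^{i/n} h''(x−x0) dx )² )^{−1/4} as k → ∞. -/
open MeasureTheory ProbabilityTheory Filter

/-- Standard normal CDF. -/
noncomputable def stdNormalCDF : ℝ → ℝ := fun x => cdf (gaussianReal 0 1) x

open Topology

noncomputable def Hint (h : ℝ → ℝ) : ℝ → ℝ := fun y => ∫ x in (0:ℝ)..y, h x

lemma hasDerivAt_Hint {h : ℝ → ℝ} (hc : Continuous h) (y : ℝ) :
    HasDerivAt (Hint h) (h y) y :=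
  intervalIntegral.integral_hasDerivAt_right (hc.intervalIntegrable _ _)
    (hc.stronglyMeasurable.stronglyMeasurableAtFilter) hc.continuousAt

lemma intInt_eq {h : ℝ → ℝ} (hc : Continuous h) (a b c : ℝ) :
    (∫ x in a..b, h (x - c)) = Hint h (b - c) - Hint h (a - c) := by
  rw [intervalIntegral.integral_comp_sub_right]
  exact (intervalIntegral.integral_interval_sub_left (hc.intervalIntegrable 0 (b-c))
    (hc.intervalIntegrable 0 (a-c))).symm

lemma cd1 {h : ℝ → ℝ} (hC2 : ContDiff ℝ 2 h) : ContDiff ℝ 1 (deriv h) := by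
  have : (2 : WithTop ℕ∞) = 1 + 1 := by norm_num
  rw [this, contDiff_succ_iff_deriv] at hC2
  exact hC2.2.2

lemma key {h : ℝ → ℝ} (hC2 : ContDiff ℝ 2 h) (y : ℝ) :
    Tendsto (fun d : ℝ =>
      ((1:ℝ)/2 * Hint h (y + d/2) + 1/2 * Hint h (y - d/2) - Hint h y) / d^2)
      (𝓝[≠] (0:ℝ)) (𝓝 (deriv h y / 8)) := by
  have hc : Continuous h := hC2.continuous
  have hdh : Differentiable ℝ h := hC2.differentiable (by norm_num)
  set f : ℝ → ℝ := fun d => (1:ℝ)/2 * Hint h (y + d/2) + 1/2 * Hint h (y - d/2) - Hint h y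
    with hf_def
  set f' : ℝ → ℝ := fun d => (1:ℝ)/4 * h (y + d/2) - 1/4 * h (y - d/2) with hf'_def
  have hf0 : f 0 = 0 := by simp [hf_def]; ring
  have hf'0 : f' 0 = 0 := by simp [hf'_def]
  have hff' : ∀ d, HasDerivAt f (f' d) d := by
    intro d
    have hin1 : HasDerivAt (fun x : ℝ => y + x/2) (1/2) d := by
      simpa using ((hasDerivAt_id d).div_const 2).const_add y
    have hin2 : HasDerivAt (fun x : ℝ => y - x/2) (-(1/2)) d := by
      simpa using ((hasDerivAt_id d).div_const 2).const_sub y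
    have h1 : HasDerivAt (fun x : ℝ => Hint h (y + x/2)) (h (y + d/2) * (1/2)) d := by
      simpa [Function.comp_def] using (hasDerivAt_Hint hc (y + d/2)).comp d hin1
    have h2 : HasDerivAt (fun x : ℝ => Hint h (y - x/2)) (h (y - d/2) * (-(1/2))) d := by
      simpa [Function.comp_def] using (hasDerivAt_Hint hc (y - d/2)).comp d hin2
    have := ((h1.const_mul ((1:ℝ)/2)).add (h2.const_mul ((1:ℝ)/2))).sub_const (Hint h y)
    convert this using 1
    · rfl
    · rfl
    · rfl
    · simp [hf'_def]; ring
  have hf'' : HasDerivAt f' (deriv h y / 4) 0 := by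
    have hin1 : HasDerivAt (fun x : ℝ => y + x/2) (1/2) (0:ℝ) := by
      simpa using ((hasDerivAt_id (0:ℝ)).div_const 2).const_add y
    have hin2 : HasDerivAt (fun x : ℝ => y - x/2) (-(1/2)) (0:ℝ) := by
      simpa using ((hasDerivAt_id (0:ℝ)).div_const 2).const_sub y
    have A : HasDerivAt (fun x : ℝ => h (y + x/2)) (deriv h y * (1/2)) 0 := by
      have := ((hdh (y + 0/2)).hasDerivAt).comp (0:ℝ) hin1
      simpa [Function.comp_def] using this
    have B : HasDerivAt (fun x : ℝ => h (y - x/2)) (deriv h y * (-(1/2))) 0 := by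
      have := ((hdh (y - 0/2)).hasDerivAt).comp (0:ℝ) hin2
      simpa [Function.comp_def] using this
    have := (A.const_mul ((1:ℝ)/4)).sub (B.const_mul ((1:ℝ)/4))
    convert this using 1
    · rfl
    · rfl
    · rfl
    · ring
  have hdiv : Tendsto (fun d => f' d / (2*d)) (𝓝[≠] (0:ℝ)) (𝓝 (deriv h y / 8)) := by
    have hs := hasDerivAt_iff_tendsto_slope.mp hf''
    have heq : (fun d : ℝ => f' d / (2*d)) = fun d => slope f' 0 d * (1/2) := by
      funext d
      rw [slope_def_field, hf'0]
      ring
    rw [heq]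
    have := hs.mul_const ((1:ℝ)/2)
    convert this using 2
    ring
  have main := HasDerivAt.lhopital_zero_nhdsNE (f' := f') (g' := fun d : ℝ => 2*d)
    (Eventually.of_forall hff')
    (Eventually.of_forall fun d => by
      simpa using hasDerivAt_pow 2 d)
    (eventually_mem_nhdsWithin.mono fun d hd => mul_ne_zero two_ne_zero hd)
    (by
      have : Tendsto f (𝓝 (0:ℝ)) (𝓝 (f 0)) := (hff' 0).continuousAt.tendsto
      rw [hf0] at this
      exact this.mono_left nhdsWithin_le_nhds)
    (by
      have : Tendsto (fun d : ℝ => d^2) (𝓝 (0:ℝ)) (𝓝 ((0:ℝ)^2)) :=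
        (continuous_pow 2).tendsto 0
      simpa using this.mono_left nhdsWithin_le_nhds)
    hdiv
  exact main

lemma key2 {h : ℝ → ℝ} (hC2 : ContDiff ℝ 2 h) (x0 a b : ℝ) :
    Tendsto (fun d : ℝ =>
      ((1:ℝ)/2 * (∫ x in a..b, h (x - (x0 - d/2))) + (1:ℝ)/2 * (∫ x in a..b, h (x - (x0 + d/2)))
        - ∫ x in a..b, h (x - x0)) / d^2)
      (𝓝[≠] (0:ℝ)) (𝓝 ((deriv h (b - x0) - deriv h (a - x0)) / 8)) := by
  have hc : Continuous h := hC2.continuous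
  have T := (key hC2 (b - x0)).sub (key hC2 (a - x0))
  rw [show deriv h (b - x0) / 8 - deriv h (a - x0) / 8
      = (deriv h (b - x0) - deriv h (a - x0)) / 8 by ring] at T
  refine T.congr fun e => ?_
  rw [intInt_eq hc, intInt_eq hc, intInt_eq hc]
  rw [show b - (x0 - e/2) = (b - x0) + e/2 by ring, show a - (x0 - e/2) = (a - x0) + e/2 by ring,
    show b - (x0 + e/2) = (b - x0) - e/2 by ring, show a - (x0 + e/2) = (a - x0) - e/2 by ring]
  ring

lemma binInt_dd {h : ℝ → ℝ} (hC2 : ContDiff ℝ 2 h) (x0 : ℝ) (n i : ℕ) :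
    binInt (deriv (deriv h)) x0 n i
      = deriv h (((i:ℝ)+1)/n - x0) - deriv h ((i:ℝ)/n - x0) := by
  have h1 : ContDiff ℝ 1 (deriv h) := cd1 hC2
  rw [binInt, intervalIntegral.integral_comp_sub_right,
    intervalIntegral.integral_deriv_eq_sub (fun x _ => h1.differentiable one_ne_zero x)
      ((h1.continuous_deriv le_rfl).intervalIntegrable _ _)]

lemma key3 {h : ℝ → ℝ} (hC2 : ContDiff ℝ 2 h) (x0 : ℝ) (n i : ℕ) :
    Tendsto (fun e : ℝ =>
      ((1/2) * binInt h (x0 - e/2) n i + (1/2) * binInt h (x0 + e/2) n i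
        - binInt h x0 n i) / e^2)
      (𝓝[≠] (0:ℝ)) (𝓝 (binInt (deriv (deriv h)) x0 n i / 8)) := by
  rw [binInt_dd hC2]
  exact key2 hC2 x0 _ _

theorem stmt17 (h : ℝ → ℝ) (hEven : ∀ x, h (-x) = h x) (hNonconst : ∃ x y, h x ≠ h y)
    (hNonneg : ∀ x, 0 ≤ h x) (hC2 : ContDiff ℝ 2 h)
    (x0 : ℝ) (hx0 : x0 ∈ Set.Ioo (0 : ℝ) 1)
    (α β : ℝ) (hα : α ∈ Set.Ioo (0 : ℝ) (1 / 2)) (hβ : β ∈ Set.Ioo (0 : ℝ) (1 / 2))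
    (n : ℕ)
    (hnpos : 0 < ∑ i ∈ Finset.range n, (binInt (deriv (deriv h)) x0 n i) ^ 2)
    (q : ℝ → ℝ) (hq : ∀ γ ∈ Set.Ioo (0 : ℝ) 1, stdNormalCDF (q γ) = γ)
    (t : ℕ → ℕ) (ht : ∀ k, 0 < t k)
    (htT : Tendsto (fun k => t k) atTop atTop)
    (d : ℕ → ℝ) (hd : ∀ k, 0 < d k) (hdT : Tendsto d atTop (nhds 0))
    (hμ : ∀ k, ((t k : ℝ) ^ 2 / 2) * ∑ i ∈ Finset.range n,
        (((1 / 2) * binInt h (x0 - d k / 2) n i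
            + (1 / 2) * binInt h (x0 + d k / 2) n i)
          - binInt h x0 n i) ^ 2
      = (q (1 - β) - q α) ^ 2 / 2) :
    Tendsto (fun k => d k * (t k : ℝ) ^ ((1 : ℝ) / 2))
      atTop (nhds (2 * Real.sqrt 2 * Real.sqrt (q (1 - β) - q α) *
        (∑ i ∈ Finset.range n,
          (binInt (deriv (deriv h)) x0 n i) ^ 2) ^ (-(1 : ℝ) / 4))) := by
  obtain ⟨hα0, hα2⟩ := hα
  obtain ⟨hβ0, hβ2⟩ := hβ
  set c := q (1 - β) - q α with hc_def
  set S := ∑ i ∈ Finset.range n, (binInt (deriv (deriv h)) x0 n i) ^ 2 with hS_def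
  have hS : 0 < S := hnpos
  -- c > 0
  have hqα : stdNormalCDF (q α) = α := hq α ⟨hα0, by linarith⟩
  have hqβ : stdNormalCDF (q (1 - β)) = 1 - β := hq _ ⟨by linarith, by linarith⟩
  have hc : 0 < c := by
    by_contra hcon
    push_neg at hcon
    have hle : q (1 - β) ≤ q α := by
      have : c ≤ 0 := hcon
      rw [hc_def] at this; linarith
    have := monotone_cdf (μ := gaussianReal 0 1) hle
    rw [show (cdf (gaussianReal 0 1)) (q (1-β)) = stdNormalCDF (q (1-β)) from rfl,
      show (cdf (gaussianReal 0 1)) (q α) = stdNormalCDF (q α) from rfl, hqα, hqβ] at this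
    linarith
  -- Limit of the sum / d^4
  have hA : Tendsto (fun e : ℝ => (∑ i ∈ Finset.range n,
      ((1/2) * binInt h (x0 - e/2) n i + (1/2) * binInt h (x0 + e/2) n i
        - binInt h x0 n i) ^ 2) / e^4)
      (𝓝[≠] (0:ℝ)) (𝓝 (S / 64)) := by
    have hterm : ∀ i ∈ Finset.range n, Tendsto (fun e : ℝ =>
        (((1/2) * binInt h (x0 - e/2) n i + (1/2) * binInt h (x0 + e/2) n i
          - binInt h x0 n i) / e^2) ^ 2)
        (𝓝[≠] (0:ℝ)) (𝓝 ((binInt (deriv (deriv h)) x0 n i / 8) ^ 2)) :=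
      fun i _ => (key3 hC2 x0 n i).pow 2
    have hsum := tendsto_finset_sum (Finset.range n) hterm
    have hval : ∑ i ∈ Finset.range n, (binInt (deriv (deriv h)) x0 n i / 8) ^ 2 = S / 64 := by
      rw [hS_def, Finset.sum_div]
      exact Finset.sum_congr rfl fun i _ => by ring
    rw [hval] at hsum
    refine hsum.congr fun e => ?_
    rw [Finset.sum_div]
    refine Finset.sum_congr rfl fun i _ => ?_
    rw [div_pow, ← pow_mul]
  have hd0 : Tendsto d atTop (𝓝[≠] (0:ℝ)) :=
    tendsto_nhdsWithin_of_tendsto_nhds_of_eventually_within _ hdT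
      (Eventually.of_forall fun k => (hd k).ne')
  have hAk := hA.comp hd0
  -- sum value from hμ
  have hSig : ∀ k, (∑ i ∈ Finset.range n,
      ((1/2) * binInt h (x0 - d k/2) n i + (1/2) * binInt h (x0 + d k/2) n i
        - binInt h x0 n i) ^ 2) = c^2 / (t k : ℝ)^2 := by
    intro k
    have htk : ((t k : ℝ))^2 ≠ 0 := by
      have : (0:ℝ) < (t k : ℝ) := by exact_mod_cast ht k
      positivity
    rw [eq_div_iff htk]
    linear_combination 2 * hμ k
  have hS64 : (S/64 : ℝ) ≠ 0 := by positivity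
  have hB : Tendsto (fun k => (d k * (t k:ℝ)^((1:ℝ)/2))^(4:ℕ)) atTop (𝓝 (64 * c^2 / S)) := by
    have h1 := (tendsto_const_nhds (x := c^2)).div hAk hS64
    rw [show c^2/(S/64) = 64*c^2/S by field_simp] at h1
    refine h1.congr fun k => ?_
    have htk0 : (0:ℝ) < (t k : ℝ) := by exact_mod_cast ht k
    have hrw : ((t k:ℝ)^((1:ℝ)/2))^(4:ℕ) = (t k:ℝ)^2 := by
      rw [← Real.rpow_natCast ((t k:ℝ)^((1:ℝ)/2)) 4, ← Real.rpow_mul htk0.le]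
      norm_num
    simp only [Pi.div_apply, Function.comp_apply]
    rw [hSig k, mul_pow, hrw]
    have hdk := (hd k).ne'
    field_simp
  have hM : (0:ℝ) < 64 * c^2 / S := by positivity
  have hroot := hB.rpow_const (p := (1:ℝ)/4) (Or.inl hM.ne')
  have hTval : (64 * c^2 / S) ^ ((1:ℝ)/4)
      = 2 * Real.sqrt 2 * Real.sqrt c * S ^ (-(1:ℝ)/4) := by
    set T := 2 * Real.sqrt 2 * Real.sqrt c * S ^ (-(1:ℝ)/4) with hT_def
    have hT : 0 ≤ T := by positivity
    have h2 : Real.sqrt 2 ^ 2 = 2 := Real.sq_sqrt (by norm_num)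
    have hcc : Real.sqrt c ^ 2 = c := Real.sq_sqrt hc.le
    have hSr : (S ^ (-(1:ℝ)/4))^(4:ℕ) = S⁻¹ := by
      rw [← Real.rpow_natCast (S ^ (-(1:ℝ)/4)) 4, ← Real.rpow_mul hS.le]
      rw [show (-(1:ℝ)/4) * ((4:ℕ):ℝ) = -1 by norm_num, Real.rpow_neg_one]
    have hT4 : T^(4:ℕ) = 64 * c^2 / S := by
      calc T^(4:ℕ) = 2^4 * (Real.sqrt 2^2)^2 * (Real.sqrt c^2)^2 * (S ^ (-(1:ℝ)/4))^(4:ℕ) := by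
            rw [hT_def]; ring
        _ = 64 * c^2 / S := by rw [h2, hcc, hSr]; field_simp; ring
    rw [← hT4, ← Real.rpow_natCast T 4, ← Real.rpow_mul hT]
    norm_num
  rw [← hTval]
  refine hroot.congr fun k => ?_
  have htk0 : (0:ℝ) < (t k : ℝ) := by exact_mod_cast ht k
  have hu : 0 ≤ d k * (t k:ℝ)^((1:ℝ)/2) := mul_nonneg (hd k).le (Real.rpow_nonneg htk0.le _)
  rw [← Real.rpow_natCast (d k * (t k:ℝ)^((1:ℝ)/2)) 4, ← Real.rpow_mul hu]
  norm_num
end
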